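/- arXiv:2201.12777 — 7 statements merged into one kernel-verified Lean document; each statement's English description precedes it below -/
import Mathlib

section
/- Let s and n be coprime positive integers and let σ : F_{q^n} → F_{q^n} be the field automorphism x ↦ x^{q^s}. Let f = a_0·id + a_1·σ + ⋯ + a_{n−1}·σ^{n−1} with a_0, …, a_{n−1} ∈ F_{q^n}, and define its adjoint f̂ = Σ_{i=0}^{n−1} σ^{n−i}(a_i)·σ^{n−i} (powers of σ composed as field automorphisms, σ^n = id). Then for every b ∈ F_{q^n}, the number of x ∈ F_{q^n}^* with f(x) = b·x equals the number of y ∈ F_{q^n}^* with f̂(y) = b·y. In particular, {f(x)/x : x ∈ F_{q^n}^*} = {f̂(y)/y : y ∈ F_{q^n}^*}. -/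
open Finset Module

section Aux

variable (p : ℕ) [Fact p.Prime] (F : Type*) [Field F] [Fintype F] [CharP F p]
  [Algebra (ZMod p) F]

/-- Frobenius iterate as a `ZMod p`-algebra equivalence of a finite field. -/
noncomputable def frobAE (k : ℕ) : F ≃ₐ[ZMod p] F := by
  letI : ExpChar F p := .prime Fact.out
  exact AlgEquiv.ofRingEquiv (f := iterateFrobeniusEquiv F p k) fun c =>
    RingHom.congr_fun (Subsingleton.elim
      ((iterateFrobeniusEquiv F p k : F →+* F).comp (algebraMap (ZMod p) F))
      (algebraMap (ZMod p) F)) c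

lemma frobAE_apply (k : ℕ) (x : F) : frobAE p F k x = x ^ p ^ k := rfl

lemma trace_pow_p (k : ℕ) (z : F) :
    Algebra.trace (ZMod p) F (z ^ p ^ k) = Algebra.trace (ZMod p) F z := by
  simpa [frobAE_apply] using Algebra.trace_eq_of_algEquiv (frobAE p F k) z

end Aux

/-- Kernels of adjoint maps w.r.t. a nondegenerate symmetric bilinear form
have the same dimension. -/
lemma finrank_ker_adjoint {K V : Type*} [Field K] [AddCommGroup V] [Module K V]
    [FiniteDimensional K V] (B : LinearMap.BilinForm K V) (hB : B.Nondegenerate)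
    (hsymm : B.IsSymm) (L M : V →ₗ[K] V) (h : ∀ x y, B (L x) y = B x (M y)) :
    finrank K (LinearMap.ker M) = finrank K (LinearMap.ker L) := by
  have h1 : LinearMap.ker M = B.orthogonal (LinearMap.range L) := by
    ext y
    rw [LinearMap.mem_ker, LinearMap.BilinForm.mem_orthogonal_iff]
    constructor
    · rintro hy z ⟨x, rfl⟩
      show B (L x) y = 0
      rw [h, hy, map_zero]
    · intro hy
      refine hB.1 (M y) fun x => ?_
      have := hy (L x) ⟨x, rfl⟩
      show B (M y) x = 0
      rw [← hsymm.eq x (M y), ← h]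
      exact this
  have h2 := LinearMap.finrank_range_add_finrank_ker L
  have h3 := Submodule.finrank_le (LinearMap.range L)
  rw [h1, LinearMap.BilinForm.finrank_orthogonal hB]
  omega

/-- **Adjoint of a σ-polynomial and linear sets.**
Let `σ : x ↦ x^(q^s)` with `gcd(s,n) = 1`, and let
`f = a₀·id + a₁·σ + ⋯ + a_{n-1}·σ^{n-1}`.  Its adjoint is
`f̂ = Σ_{i} σ^{n-i}(a_i)·σ^{n-i}`.  Then for every `b`, the number of nonzero
`x` with `f x = b·x` equals the number of nonzero `y` with `f̂ y = b·y`;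
in particular the value sets of `f(x)/x` and `f̂(y)/y` coincide. -/
theorem adjoint_same_linear_set (p r q n s : ℕ) (hp : p.Prime) (hr : 0 < r)
    (hq : q = p ^ r) (hn : 0 < n) (hs : 0 < s) (hsn : Nat.Coprime s n)
    (F : Type*) [Field F] [Fintype F] (hF : Fintype.card F = q ^ n)
    (a : ℕ → F)
    (f fhat : F → F)
    (hf : f = fun x => ∑ i ∈ Finset.range n, a i * x ^ q ^ (s * i))
    (hfhat : fhat = fun y =>
      ∑ i ∈ Finset.range n, a i ^ q ^ (s * (n - i)) * y ^ q ^ (s * (n - i))) :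
    (∀ b : F,
      {x : F | x ≠ 0 ∧ f x = b * x}.ncard = {y : F | y ≠ 0 ∧ fhat y = b * y}.ncard) ∧
    {z : F | ∃ x : F, x ≠ 0 ∧ z = f x / x} = {z : F | ∃ y : F, y ≠ 0 ∧ z = fhat y / y} := by
  haveI : Fact p.Prime := ⟨hp⟩
  -- the characteristic of `F` is `p`
  have hcard : Fintype.card F = p ^ (r * n) := by rw [hF, hq, ← pow_mul]
  haveI : CharP F p := by
    haveI := ringChar.charP F
    obtain ⟨m, hcp, hcm⟩ := FiniteField.card F (ringChar F)
    have hrn : 0 < r * n := Nat.mul_pos hr hn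
    have hpd : p ∣ ringChar F ^ (m : ℕ) := by
      rw [← hcm, hcard]; exact dvd_pow_self p hrn.ne'
    have : ringChar F = p :=
      ((Nat.prime_dvd_prime_iff_eq hp hcp).mp (hp.dvd_of_dvd_pow hpd)).symm
    exact this ▸ ringChar.charP F
  letI : Algebra (ZMod p) F := ZMod.algebra F p
  -- exponent bookkeeping
  have hqe : ∀ t : ℕ, (q : ℕ) ^ t = p ^ (r * t) := fun t => by rw [hq, ← pow_mul]
  have hX : ∀ x : F, x ^ p ^ (r * (s * n)) = x := by
    intro x
    have := FiniteField.pow_card_pow s x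
    rwa [hcard, ← pow_mul, show r * n * s = r * (s * n) by ring] at this
  -- trace notation
  set T := Algebra.trace (ZMod p) F with hT
  -- the key adjoint identity, term by term
  have hterm : ∀ i ∈ Finset.range n, ∀ x y : F,
      T (a i * x ^ q ^ (s * i) * y) =
        T (a i ^ q ^ (s * (n - i)) * y ^ q ^ (s * (n - i)) * x) := by
    intro i hi x y
    rw [Finset.mem_range] at hi
    have hk : r * (s * i) + r * (s * (n - i)) = r * (s * n) := by
      rw [← Nat.mul_add, ← Nat.mul_add, Nat.add_sub_cancel' hi.le]
    calc T (a i * x ^ q ^ (s * i) * y)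
        = T ((a i * x ^ q ^ (s * i) * y) ^ p ^ (r * (s * (n - i)))) :=
          (trace_pow_p p F _ _).symm
      _ = T (a i ^ q ^ (s * (n - i)) * y ^ q ^ (s * (n - i)) * x) := by
          congr 1
          rw [mul_pow, mul_pow, hqe (s * i), ← pow_mul, ← pow_add, hk, hX x,
            hqe (s * (n - i))]
          ring
  have key : ∀ x y : F, T (f x * y) = T (fhat y * x) := by
    intro x y
    rw [hf, hfhat]
    simp only [Finset.sum_mul, map_sum]
    exact Finset.sum_congr rfl fun i hi => hterm i hi x y
  -- the trace form
  have hB : (Algebra.traceForm (ZMod p) F).Nondegenerate :=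
    traceForm_nondegenerate _ _
  have hBsymm : (Algebra.traceForm (ZMod p) F).IsSymm := Algebra.traceForm_isSymm (ZMod p)
  have hφ : ∀ (k : ℕ) (x : F), (frobAE p F k).toLinearMap x = x ^ p ^ k := fun k x => rfl
  -- counting formula for every b
  have part1 : ∀ b : F,
      {x : F | x ≠ 0 ∧ f x = b * x}.ncard = {y : F | y ≠ 0 ∧ fhat y = b * y}.ncard := by
    intro b
    set L : F →ₗ[ZMod p] F :=
      (∑ i ∈ Finset.range n, a i • (frobAE p F (r * (s * i))).toLinearMap)
        - b • LinearMap.id with hLdef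
    set M : F →ₗ[ZMod p] F :=
      (∑ i ∈ Finset.range n,
          (a i ^ q ^ (s * (n - i))) • (frobAE p F (r * (s * (n - i)))).toLinearMap)
        - b • LinearMap.id with hMdef
    have hL : ∀ x : F, L x = f x - b * x := by
      intro x
      rw [hLdef, hf]
      simp only [LinearMap.sub_apply, LinearMap.smul_apply, LinearMap.sum_apply,
        LinearMap.id_apply, smul_eq_mul, hφ]
      congr 1
      exact Finset.sum_congr rfl fun i _ => by rw [hqe (s * i)]
    have hM : ∀ y : F, M y = fhat y - b * y := by
      intro y
      rw [hMdef, hfhat]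
      simp only [LinearMap.sub_apply, LinearMap.smul_apply, LinearMap.sum_apply,
        LinearMap.id_apply, smul_eq_mul, hφ]
      congr 1
      exact Finset.sum_congr rfl fun i _ => by rw [hqe (s * (n - i))]
    have hadj : ∀ x y : F,
        (Algebra.traceForm (ZMod p) F) (L x) y = (Algebra.traceForm (ZMod p) F) x (M y) := by
      intro x y
      have e1 : (Algebra.traceForm (ZMod p) F) (L x) y = T (f x * y) - T (b * x * y) := by
        rw [Algebra.traceForm_apply, hL, sub_mul, map_sub]
      have e2 : (Algebra.traceForm (ZMod p) F) x (M y) = T (fhat y * x) - T (b * x * y) := by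
        rw [Algebra.traceForm_apply, hM, mul_sub, map_sub,
          mul_comm x (fhat y), show x * (b * y) = b * x * y by ring]
      rw [e1, e2, key x y]
    have hdim := finrank_ker_adjoint _ hB hBsymm L M hadj
    -- cardinalities of the kernels
    have hkercard : ∀ L' : F →ₗ[ZMod p] F,
        ((LinearMap.ker L' : Set F)).ncard = p ^ finrank (ZMod p) (LinearMap.ker L') := by
      intro L'
      haveI : Fintype (LinearMap.ker L') := Fintype.ofFinite _
      have h := Module.card_eq_pow_finrank (K := ZMod p) (V := LinearMap.ker L')
      rw [ZMod.card] at h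
      rw [← h, ← Nat.card_eq_fintype_card, ← Nat.card_coe_set_eq]
      rfl
    have hsetL : {x : F | x ≠ 0 ∧ f x = b * x} = (LinearMap.ker L : Set F) \ {0} := by
      ext x
      simp only [Set.mem_setOf_eq, Set.mem_diff, SetLike.mem_coe, LinearMap.mem_ker,
        Set.mem_singleton_iff, hL, sub_eq_zero]
      tauto
    have hsetM : {y : F | y ≠ 0 ∧ fhat y = b * y} = (LinearMap.ker M : Set F) \ {0} := by
      ext y
      simp only [Set.mem_setOf_eq, Set.mem_diff, SetLike.mem_coe, LinearMap.mem_ker,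
        Set.mem_singleton_iff, hM, sub_eq_zero]
      tauto
    rw [hsetL, hsetM,
      Set.ncard_diff_singleton_of_mem (by simp : (0 : F) ∈ (LinearMap.ker L : Set F)),
      Set.ncard_diff_singleton_of_mem (by simp : (0 : F) ∈ (LinearMap.ker M : Set F)),
      hkercard L, hkercard M, hdim]
  refine ⟨part1, ?_⟩
  ext z
  simp only [Set.mem_setOf_eq]
  have h1 : ∀ (g : F → F) (x : F), x ≠ 0 → (z = g x / x ↔ g x = z * x) := by
    intro g x hx
    rw [eq_div_iff hx, eq_comm]
  have h2 : (∃ x : F, x ≠ 0 ∧ z = f x / x) ↔ {x : F | x ≠ 0 ∧ f x = z * x}.Nonempty := by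
    constructor
    · rintro ⟨x, hx, hzx⟩; exact ⟨x, hx, (h1 f x hx).mp hzx⟩
    · rintro ⟨x, hx, hzx⟩; exact ⟨x, hx, (h1 f x hx).mpr hzx⟩
  have h3 : (∃ y : F, y ≠ 0 ∧ z = fhat y / y) ↔ {y : F | y ≠ 0 ∧ fhat y = z * y}.Nonempty := by
    constructor
    · rintro ⟨x, hx, hzx⟩; exact ⟨x, hx, (h1 fhat x hx).mp hzx⟩
    · rintro ⟨x, hx, hzx⟩; exact ⟨x, hx, (h1 fhat x hx).mpr hzx⟩
  rw [h2, h3, ← Set.ncard_pos (Set.toFinite _), ← Set.ncard_pos (Set.toFinite _), part1 z]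
end

section
/- Let s and n be coprime positive integers with n odd, and let θ, δ, d be nonzero elements of F_{q^n}. If {x^{q^s−1} + θ·x^{q^{n−s}−1} : x ∈ F_{q^n}^*} = {d·(x^{q^s−1} + δ·x^{q^{n−s}−1}) : x ∈ F_{q^n}^*}, then 1 + N_{q^n/q}(θ) = N_{q^n/q}(d)·(1 + N_{q^n/q}(δ)). -/
open Finset Polynomial

private lemma aux_prod_range_mul_of_period {M : Type*} [CommMonoid M] (h : ℕ → M) (e : ℕ)
    (hper : ∀ i, h (i + e) = h i) :
    ∀ k, ∏ i ∈ Finset.range (e * k), h i = ∏ j ∈ Finset.range e, h j ^ k := by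
  have hshift : ∀ t i, h (i + e * t) = h i := by
    intro t
    induction t with
    | zero => simp
    | succ t iht =>
      intro i
      rw [Nat.mul_succ, ← Nat.add_assoc, hper, iht]
  intro k
  induction k with
  | zero => simp
  | succ k ih =>
    rw [Nat.mul_succ, Finset.prod_range_add, ih, ← Finset.prod_mul_distrib]
    refine Finset.prod_congr rfl fun j hj => ?_
    rw [show e * k + j = j + e * k by omega, hshift k j, pow_succ]

private lemma aux_gcd_pow_sub_one (q : ℕ) (hq : 2 ≤ q) :
    ∀ a b : ℕ, Nat.gcd (q ^ a - 1) (q ^ b - 1) = q ^ Nat.gcd a b - 1 := by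
  intro a
  induction a using Nat.strong_induction_on with
  | _ a IH =>
    intro b
    rcases Nat.eq_zero_or_pos a with rfl | ha
    · simp
    · have h1 : (1:ℕ) ≤ q ^ (b % a) := Nat.one_le_pow _ _ (by omega)
      have h2 : (q:ℕ) ^ a - 1 ∣ q ^ (a * (b / a)) - 1 := by
        rw [pow_mul]
        simpa using Nat.sub_dvd_pow_sub_pow (q ^ a) 1 (b / a)
      obtain ⟨t, ht⟩ := h2
      have hbmod : q ^ (b % a) * (q ^ (a * (b / a)) - 1) = q ^ b - q ^ (b % a) := by
        rw [Nat.mul_sub, mul_one, ← pow_add]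
        congr 2
        rw [Nat.mod_add_div]
      have key : q ^ (b % a) * t * (q ^ a - 1) = q ^ b - q ^ (b % a) := by
        rw [mul_assoc, mul_comm t, ← ht]; exact hbmod
      have hle : q ^ (b % a) ≤ q ^ b := Nat.pow_le_pow_right (by omega) (Nat.mod_le b a)
      have hdecomp : q ^ b - 1 = (q ^ (b % a) - 1) + q ^ (b % a) * t * (q ^ a - 1) := by
        omega
      rw [hdecomp, Nat.gcd_add_mul_right_right, Nat.gcd_comm,
        IH (b % a) (Nat.mod_lt b ha)]
      have hrec : Nat.gcd a b = Nat.gcd (b % a) a := Nat.gcd_rec a b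
      rw [hrec]

/-- **Necessary norm condition for equality of the linear sets `L_f = L_{d·g}`, `n` odd.**
If `{x^{q^s-1} + θ x^{q^{n-s}-1}} = {d (x^{q^s-1} + δ x^{q^{n-s}-1})}` as subsets of
`F_{q^n}` (`x` ranging over nonzero elements), then
`1 + N(θ) = N(d) (1 + N(δ))`, where `N(a) = a^{(q^n-1)/(q-1)}`. -/
theorem two_terms_norm_condition_odd (p r q n s : ℕ) (hp : p.Prime) (hr : 0 < r)
    (hq : q = p ^ r) (hn : 0 < n) (hs : 0 < s) (hsn : Nat.Coprime s n) (hodd : Odd n)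
    (F : Type*) [Field F] [Fintype F] (hF : Fintype.card F = q ^ n)
    (θ δ d : F) (hθ : θ ≠ 0) (hδ : δ ≠ 0) (hd : d ≠ 0)
    (hset : {y : F | ∃ x : F, x ≠ 0 ∧ y = x ^ (q ^ s - 1) + θ * x ^ (q ^ (n - s) - 1)} =
      {y : F | ∃ x : F, x ≠ 0 ∧ y = d * (x ^ (q ^ s - 1) + δ * x ^ (q ^ (n - s) - 1))}) :
    1 + θ ^ ((q ^ n - 1) / (q - 1)) =
      d ^ ((q ^ n - 1) / (q - 1)) * (1 + δ ^ ((q ^ n - 1) / (q - 1))) := by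
  classical
  have hq2 : 2 ≤ q := by
    rw [hq]; exact Nat.one_lt_pow hr.ne' hp.one_lt
  set m : ℕ := q - 1 with hm
  have hm1 : 1 ≤ m := by omega
  have hqn2 : 2 ≤ q ^ n := le_trans hq2 (Nat.le_self_pow hn.ne' q)
  set N : ℕ := q ^ n - 1 with hN
  set E : ℕ := N / m with hE
  -- geometric sum facts
  have hgeom : (∑ i ∈ Finset.range n, q ^ i) * m = N := by
    have h := geom_sum_mul (q : ℤ) n
    have : ((∑ i ∈ Finset.range n, q ^ i : ℕ) : ℤ) * ((m : ℕ) : ℤ) = ((N : ℕ) : ℤ) := by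
      push_cast [hm, hN, Nat.cast_sub (by omega : 1 ≤ q),
        Nat.cast_sub (by omega : 1 ≤ q ^ n)] at h ⊢
      linear_combination h
    exact_mod_cast this
  have hEsum : E = ∑ i ∈ Finset.range n, q ^ i := by
    rw [hE]
    exact Nat.div_eq_of_eq_mul_left (by omega) hgeom.symm
  have hEm : E * m = N := by rw [hEsum]; exact hgeom
  have hE1 : 1 ≤ E := by
    rcases Nat.eq_zero_or_pos E with h0 | h1
    · rw [h0] at hEm; omega
    · exact h1
  have hEodd : Odd E := by
    rw [Nat.odd_iff, hEsum, Finset.sum_nat_mod]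
    rcases Nat.even_or_odd q with hqe | hqo
    · have hq0 : q % 2 = 0 := Nat.even_iff.mp hqe
      have hterm : ∀ i ∈ Finset.range n, q ^ i % 2 = if i = 0 then 1 else 0 := by
        intro i _
        rcases Nat.eq_zero_or_pos i with rfl | hipos
        · simp
        · rw [Nat.pow_mod, hq0, zero_pow (by omega : i ≠ 0), if_neg (by omega : ¬ i = 0)]
          rfl
      rw [Finset.sum_congr rfl hterm, Finset.sum_ite_eq' (Finset.range n) 0 (fun _ => 1),
        if_pos (Finset.mem_range.mpr hn)]
    · have hq1 : q % 2 = 1 := Nat.odd_iff.mp hqo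
      have hterm : ∀ i ∈ Finset.range n, q ^ i % 2 = 1 := by
        intro i _; rw [Nat.pow_mod, hq1, one_pow]; rfl
      rw [Finset.sum_congr rfl hterm, Finset.sum_const, Finset.card_range, smul_eq_mul,
        mul_one]
      exact Nat.odd_iff.mp hodd
  -- characteristic
  have hchar : CharP F p := by
    haveI := ringChar.charP F
    obtain ⟨k, hpk, hcard⟩ := FiniteField.card F (ringChar F)
    have hdvd : ringChar F ∣ p ^ (r * n) := by
      have h1 : ringChar F ∣ Fintype.card F := by
        rw [hcard]
        exact dvd_pow_self _ (by exact_mod_cast k.pos.ne')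
      rwa [hF, hq, ← pow_mul] at h1
    have heq : ringChar F = p :=
      (Nat.prime_dvd_prime_iff_eq hpk hp).mp (hpk.dvd_of_dvd_pow hdvd)
    rw [← heq]
    exact ringChar.charP F
  haveI := hchar
  haveI : ExpChar F p := ExpChar.prime hp
  have hfrob : ∀ (k : ℕ) (a b : F), (a - b) ^ q ^ k = a ^ q ^ k - b ^ q ^ k := by
    intro k a b
    haveI : Fact p.Prime := ⟨hp⟩
    rw [hq, ← pow_mul]
    exact sub_pow_char_pow a b (r * k)
  -- generator of units
  obtain ⟨ξ, hξ⟩ := IsCyclic.exists_generator (α := Fˣ)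
  have hcardU : Fintype.card Fˣ = N := by rw [Fintype.card_units, hF]
  have horder : orderOf ξ = N := by
    rw [orderOf_eq_card_of_forall_mem_zpowers hξ, Nat.card_eq_fintype_card, hcardU]
  set X : F := (ξ : F) with hXdef
  have hX0 : X ≠ 0 := Units.ne_zero ξ
  set A : ℕ := q ^ s - 1 with hA
  set B : ℕ := q ^ (n - s) - 1 with hB
  have hqs1 : 1 ≤ q ^ s := Nat.one_le_pow _ _ (by omega)
  have hqns1 : 1 ≤ q ^ (n - s) := Nat.one_le_pow _ _ (by omega)
  have hA1 : A + 1 = q ^ s := by omega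
  have hB1 : B + 1 = q ^ (n - s) := by omega
  have hmA : m ∣ A := by
    rw [hA, hm]; simpa using Nat.sub_dvd_pow_sub_pow q 1 s
  have hmB : m ∣ B := by
    rw [hB, hm]; simpa using Nat.sub_dvd_pow_sub_pow q 1 (n - s)
  -- step A : off the linear set, the product is 1
  have key : ∀ a b : F, ∀ y : F, (¬ ∃ x : F, x ≠ 0 ∧ y = a * x ^ A + b * x ^ B) →
      ∏ x : Fˣ, (y - (a * (x : F) ^ A + b * (x : F) ^ B)) = 1 := by
    intro a b y hy
    set ℓ : F → F := fun z => y * z - (a * z ^ q ^ s + b * z ^ q ^ (n - s)) with hℓ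
    have hkey : ∀ z : F, ℓ z = z * (y - (a * z ^ A + b * z ^ B)) := by
      intro z
      have hzA : z * z ^ A = z ^ q ^ s := by rw [← pow_succ', hA1]
      have hzB : z * z ^ B = z ^ q ^ (n - s) := by rw [← pow_succ', hB1]
      calc ℓ z = y * z - (a * z ^ q ^ s + b * z ^ q ^ (n - s)) := rfl
        _ = y * z - (a * (z * z ^ A) + b * (z * z ^ B)) := by rw [hzA, hzB]
        _ = z * (y - (a * z ^ A + b * z ^ B)) := by ring
    have hsubl : ∀ u v : F, ℓ (u - v) = ℓ u - ℓ v := by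
      intro u v
      simp only [hℓ]
      rw [hfrob s u v, hfrob (n - s) u v]
      ring
    have hinj : Function.Injective ℓ := by
      intro u v huv
      by_contra hne
      have huv0 : u - v ≠ 0 := sub_ne_zero.mpr hne
      have h0 : ℓ (u - v) = 0 := by rw [hsubl, huv, sub_self]
      rw [hkey] at h0
      rcases mul_eq_zero.mp h0 with h | h
      · exact huv0 h
      · exact hy ⟨u - v, huv0, sub_eq_zero.mp h⟩
    have hne0 : ∀ x : Fˣ, ℓ ((x : F)) ≠ 0 := by
      intro x hx
      rw [hkey] at hx
      rcases mul_eq_zero.mp hx with h | h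
      · exact Units.ne_zero x h
      · exact hy ⟨(x : F), Units.ne_zero x, sub_eq_zero.mp h⟩
    have hsurj : Function.Surjective ℓ := Finite.surjective_of_injective hinj
    set σ : Fˣ → Fˣ := fun x => Units.mk0 (ℓ (x : F)) (hne0 x) with hσ
    have hσinj : Function.Injective σ := by
      intro u v h
      have h2 : ℓ (u : F) = ℓ (v : F) := by
        have h3 := congrArg Units.val h
        simpa [hσ] using h3
      exact Units.ext (hinj h2)
    have hσsurj : Function.Surjective σ := by
      intro u
      obtain ⟨z, hz⟩ := hsurj ((u : F))
      have hz0 : z ≠ 0 := by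
        rintro rfl
        have hl0 : ℓ 0 = 0 := by rw [hkey]; ring
        exact Units.ne_zero u (by rw [← hz, hl0])
      refine ⟨Units.mk0 z hz0, Units.ext ?_⟩
      simp only [hσ, Units.val_mk0]
      rw [hz]
    have hcomp := Function.Bijective.prod_comp
      (⟨hσinj, hσsurj⟩ : Function.Bijective σ) (fun u : Fˣ => (u : F))
    have hval : ∀ x : Fˣ, ((σ x : F)) = (x : F) * (y - (a * (x : F) ^ A + b * (x : F) ^ B)) := by
      intro x
      simp only [hσ, Units.val_mk0]
      exact hkey _
    rw [Finset.prod_congr rfl (fun x _ => hval x), Finset.prod_mul_distrib] at hcomp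
    have hPu : (∏ x : Fˣ, (x : F)) ≠ 0 := by
      have hcast : (∏ x : Fˣ, (x : F)) = (((∏ x : Fˣ, x : Fˣ)) : F) := by
        rw [← Units.coeHom_apply, map_prod]
        rfl
      rw [hcast]
      exact Units.ne_zero _
    exact mul_left_cancel₀ hPu (by rw [hcomp, mul_one])
  -- the two Rédei-type polynomials
  set Q : F[X] := ∏ x : Fˣ, (Polynomial.X - Polynomial.C ((x : F) ^ A + θ * (x : F) ^ B))
    with hQdef
  set R : F[X] := ∏ x : Fˣ,
      (Polynomial.X - Polynomial.C (d * ((x : F) ^ A + δ * (x : F) ^ B))) with hRdef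
  have hQR : Q = R := by
    have hdegQ : Q.natDegree ≤ N := by
      calc Q.natDegree ≤ ∑ x : Fˣ, (Polynomial.X -
            Polynomial.C ((x : F) ^ A + θ * (x : F) ^ B)).natDegree :=
            Polynomial.natDegree_prod_le _ _
        _ = ∑ _x : Fˣ, 1 := Finset.sum_congr rfl fun x _ => natDegree_X_sub_C _
        _ = N := by rw [Finset.sum_const, Finset.card_univ, hcardU, smul_eq_mul, mul_one]
    have hdegR : R.natDegree ≤ N := by
      calc R.natDegree ≤ ∑ x : Fˣ, (Polynomial.X -
            Polynomial.C (d * ((x : F) ^ A + δ * (x : F) ^ B))).natDegree :=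
            Polynomial.natDegree_prod_le _ _
        _ = ∑ _x : Fˣ, 1 := Finset.sum_congr rfl fun x _ => natDegree_X_sub_C _
        _ = N := by rw [Finset.sum_const, Finset.card_univ, hcardU, smul_eq_mul, mul_one]
    have hevalQ : ∀ y : F, Q.eval y = ∏ x : Fˣ, (y - ((x : F) ^ A + θ * (x : F) ^ B)) := by
      intro y
      rw [hQdef, Polynomial.eval_prod]
      exact Finset.prod_congr rfl fun x _ => by simp
    have hevalR : ∀ y : F,
        R.eval y = ∏ x : Fˣ, (y - d * ((x : F) ^ A + δ * (x : F) ^ B)) := by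
      intro y
      rw [hRdef, Polynomial.eval_prod]
      exact Finset.prod_congr rfl fun x _ => by simp
    have heq : ∀ y : F, Q.eval y = R.eval y := by
      intro y
      by_cases hy : ∃ x : F, x ≠ 0 ∧ y = x ^ A + θ * x ^ B
      · obtain ⟨x0, hx0, hyx⟩ := hy
        have hy2 : ∃ x : F, x ≠ 0 ∧ y = d * (x ^ A + δ * x ^ B) := by
          have hmem : y ∈ {y : F | ∃ x : F, x ≠ 0 ∧
              y = d * (x ^ A + δ * x ^ B)} := by
            rw [← hset]
            exact ⟨x0, hx0, hyx⟩
          exact hmem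
        obtain ⟨x1, hx1, hyx1⟩ := hy2
        have t1 : y - (((Units.mk0 x0 hx0 : Fˣ) : F) ^ A
            + θ * ((Units.mk0 x0 hx0 : Fˣ) : F) ^ B) = 0 := by
          rw [Units.val_mk0, hyx, sub_self]
        have t2 : y - d * (((Units.mk0 x1 hx1 : Fˣ) : F) ^ A
            + δ * ((Units.mk0 x1 hx1 : Fˣ) : F) ^ B) = 0 := by
          rw [Units.val_mk0, hyx1, sub_self]
        have hQ0 : Q.eval y = 0 := by
          rw [hevalQ y]
          exact Finset.prod_eq_zero (Finset.mem_univ (Units.mk0 x0 hx0)) t1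
        have hR0 : R.eval y = 0 := by
          rw [hevalR y]
          exact Finset.prod_eq_zero (Finset.mem_univ (Units.mk0 x1 hx1)) t2
        rw [hQ0, hR0]
      · have hyT : ¬ ∃ x : F, x ≠ 0 ∧ y = d * (x ^ A + δ * x ^ B) := by
          intro h
        -- transfer along hset
          exact hy ((Set.ext_iff.mp hset y).mpr h)
        have h1 : Q.eval y = 1 := by
          rw [hevalQ y]
          have hy' : ¬ ∃ x : F, x ≠ 0 ∧ y = 1 * x ^ A + θ * x ^ B := by
            intro ⟨x, hx, hxy⟩
            exact hy ⟨x, hx, by rw [hxy]; ring⟩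
          have hk := key 1 θ y hy'
          calc ∏ x : Fˣ, (y - ((x : F) ^ A + θ * (x : F) ^ B))
              = ∏ x : Fˣ, (y - (1 * (x : F) ^ A + θ * (x : F) ^ B)) :=
              Finset.prod_congr rfl fun x _ => by ring
            _ = 1 := hk
        have h2 : R.eval y = 1 := by
          rw [hevalR y]
          have hy' : ¬ ∃ x : F, x ≠ 0 ∧ y = d * x ^ A + (d * δ) * x ^ B := by
            intro ⟨x, hx, hxy⟩
            exact hyT ⟨x, hx, by rw [hxy]; ring⟩
          have hk := key d (d * δ) y hy'
          calc ∏ x : Fˣ, (y - d * ((x : F) ^ A + δ * (x : F) ^ B))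
              = ∏ x : Fˣ, (y - (d * (x : F) ^ A + (d * δ) * (x : F) ^ B)) :=
              Finset.prod_congr rfl fun x _ => by ring
            _ = 1 := hk
        rw [h1, h2]
    by_contra hne
    have hD0 : Q - R ≠ 0 := sub_ne_zero.mpr hne
    have hroots : (Finset.univ : Finset F) ⊆ (Q - R).roots.toFinset := by
      intro y _
      rw [Multiset.mem_toFinset, Polynomial.mem_roots hD0]
      show (Q - R).eval y = 0
      rw [Polynomial.eval_sub, heq y, sub_self]
    have hcard : Fintype.card F ≤ (Q - R).natDegree := by
      calc Fintype.card F = (Finset.univ : Finset F).card := Finset.card_univ.symm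
        _ ≤ (Q - R).roots.toFinset.card := Finset.card_le_card hroots
        _ ≤ Multiset.card (Q - R).roots := Multiset.toFinset_card_le _
        _ ≤ (Q - R).natDegree := Polynomial.card_roots' _
    have hdeg : (Q - R).natDegree ≤ N :=
      le_trans (Polynomial.natDegree_sub_le _ _) (max_le hdegQ hdegR)
    rw [hF] at hcard
    omega
  -- reindex products along powers of the generator
  set g : ℕ → F := fun i => X ^ (i * A) + θ * X ^ (i * B) with hgdef
  set g' : ℕ → F := fun i => d * (X ^ (i * A) + δ * X ^ (i * B)) with hg'def
  have hXN : X ^ N = 1 := by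
    have : ξ ^ N = 1 := by rw [← horder]; exact pow_orderOf_eq_one ξ
    calc X ^ N = ((ξ ^ N : Fˣ) : F) := by rw [Units.val_pow_eq_pow_val]
    _ = 1 := by rw [this]; rfl
  have hXEA : X ^ (E * A) = 1 := by
    obtain ⟨a', ha'⟩ := hmA
    rw [show E * A = N * a' by rw [ha', ← hEm]; ring, pow_mul, hXN, one_pow]
  have hXEB : X ^ (E * B) = 1 := by
    obtain ⟨b', hb'⟩ := hmB
    rw [show E * B = N * b' by rw [hb', ← hEm]; ring, pow_mul, hXN, one_pow]
  have hgper : ∀ i, g (i + E) = g i := by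
    intro i
    rw [hgdef]
    simp only
    rw [add_mul, add_mul, pow_add, pow_add, hXEA, hXEB, mul_one, mul_one]
  have hg'per : ∀ i, g' (i + E) = g' i := by
    intro i
    rw [hg'def]
    simp only
    rw [add_mul, add_mul, pow_add, pow_add, hXEA, hXEB, mul_one, mul_one]
  have hPP' : (∏ j ∈ Finset.range E, (Polynomial.X - Polynomial.C (g j))) ^ m
      = (∏ j ∈ Finset.range E, (Polynomial.X - Polynomial.C (g' j))) ^ m := by
    have hinjOn : ∀ x ∈ Finset.range N, ∀ y ∈ Finset.range N, ξ ^ x = ξ ^ y → x = y := by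
      intro i hi j hj hij
      exact pow_injOn_Iio_orderOf (by simpa [horder] using Finset.mem_range.mp hi)
        (by simpa [horder] using Finset.mem_range.mp hj) hij
    have himg : Finset.image (fun i => ξ ^ i) (Finset.range N) = (Finset.univ : Finset Fˣ) := by
      apply Finset.eq_univ_of_card
      rw [Finset.card_image_of_injOn (fun i hi j hj hij => hinjOn i hi j hj hij),
        Finset.card_range, hcardU]
    have hcoe : ∀ i : ℕ, (((ξ ^ i : Fˣ) : F)) = X ^ i := fun i => by
      rw [Units.val_pow_eq_pow_val]
    have hQrw : Q = ∏ i ∈ Finset.range N, (Polynomial.X - Polynomial.C (g i)) := by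
      calc Q = ∏ x ∈ Finset.image (fun i => ξ ^ i) (Finset.range N),
            (Polynomial.X - Polynomial.C ((x : F) ^ A + θ * (x : F) ^ B)) := by
            rw [himg, hQdef]
        _ = ∏ i ∈ Finset.range N, (Polynomial.X -
            Polynomial.C ((((ξ ^ i : Fˣ) : F)) ^ A + θ * (((ξ ^ i : Fˣ) : F)) ^ B)) :=
            Finset.prod_image hinjOn
        _ = ∏ i ∈ Finset.range N, (Polynomial.X - Polynomial.C (g i)) := by
            refine Finset.prod_congr rfl fun i _ => ?_
            rw [hcoe i, ← pow_mul, ← pow_mul, hgdef]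
    have hRrw : R = ∏ i ∈ Finset.range N, (Polynomial.X - Polynomial.C (g' i)) := by
      calc R = ∏ x ∈ Finset.image (fun i => ξ ^ i) (Finset.range N),
            (Polynomial.X - Polynomial.C (d * ((x : F) ^ A + δ * (x : F) ^ B))) := by
            rw [himg, hRdef]
        _ = ∏ i ∈ Finset.range N, (Polynomial.X -
            Polynomial.C (d * ((((ξ ^ i : Fˣ) : F)) ^ A + δ * (((ξ ^ i : Fˣ) : F)) ^ B))) :=
            Finset.prod_image hinjOn
        _ = ∏ i ∈ Finset.range N, (Polynomial.X - Polynomial.C (g' i)) := by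
            refine Finset.prod_congr rfl fun i _ => ?_
            rw [hcoe i, ← pow_mul, ← pow_mul, hg'def]
    have hQP : Q = (∏ j ∈ Finset.range E, (Polynomial.X - Polynomial.C (g j))) ^ m := by
      rw [hQrw, ← hEm,
        aux_prod_range_mul_of_period (fun i => Polynomial.X - Polynomial.C (g i)) E
          (fun i => congrArg (fun z => Polynomial.X - Polynomial.C z) (hgper i)) m,
        Finset.prod_pow]
    have hRP : R = (∏ j ∈ Finset.range E, (Polynomial.X - Polynomial.C (g' j))) ^ m := by
      rw [hRrw, ← hEm,
        aux_prod_range_mul_of_period (fun i => Polynomial.X - Polynomial.C (g' i)) E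
          (fun i => congrArg (fun z => Polynomial.X - Polynomial.C z) (hg'per i)) m,
        Finset.prod_pow]
    rw [← hQP, ← hRP, hQR]
  have hprodEq : ∏ j ∈ Finset.range E, g j = ∏ j ∈ Finset.range E, g' j := by
    have hrP : (∏ j ∈ Finset.range E, (Polynomial.X - Polynomial.C (g j))).roots
        = Multiset.map g (Finset.range E).val := by
      rw [Finset.prod_eq_multiset_prod,
        show Multiset.map (fun j => Polynomial.X - Polynomial.C (g j)) (Finset.range E).val
          = Multiset.map (fun a => Polynomial.X - Polynomial.C a)
            (Multiset.map g (Finset.range E).val) by rw [Multiset.map_map]; rfl,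
        Polynomial.roots_multiset_prod_X_sub_C]
    have hrP' : (∏ j ∈ Finset.range E, (Polynomial.X - Polynomial.C (g' j))).roots
        = Multiset.map g' (Finset.range E).val := by
      rw [Finset.prod_eq_multiset_prod,
        show Multiset.map (fun j => Polynomial.X - Polynomial.C (g' j)) (Finset.range E).val
          = Multiset.map (fun a => Polynomial.X - Polynomial.C a)
            (Multiset.map g' (Finset.range E).val) by rw [Multiset.map_map]; rfl,
        Polynomial.roots_multiset_prod_X_sub_C]
    have hmm := congrArg Polynomial.roots hPP'
    rw [Polynomial.roots_pow, Polynomial.roots_pow, hrP, hrP'] at hmm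
    have hms : Multiset.map g (Finset.range E).val = Multiset.map g' (Finset.range E).val := by
      rw [Multiset.ext]
      intro a
      have hc := congrArg (Multiset.count a) hmm
      rw [Multiset.count_nsmul, Multiset.count_nsmul] at hc
      exact Nat.eq_of_mul_eq_mul_left (by omega) hc
    rw [Finset.prod_eq_multiset_prod, Finset.prod_eq_multiset_prod, hms]
  -- the primitive root η of order E
  set η : Fˣ := ξ ^ A * (ξ ^ B)⁻¹ with hηdef
  have hcopNq : Nat.Coprime N q := by
    have hd1 : Nat.gcd N q ∣ q ^ n := dvd_pow (Nat.gcd_dvd_right N q) hn.ne'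
    have hd2 : Nat.gcd N q ∣ N := Nat.gcd_dvd_left N q
    have hd3 : Nat.gcd N q ∣ 1 := by
      have h4 := Nat.dvd_sub hd1 hd2
      rwa [hN, show q ^ n - (q ^ n - 1) = 1 by omega] at h4
    exact Nat.dvd_one.mp hd3
  have hcop2 : Nat.Coprime n 2 := by
    have h2 : Nat.Coprime 2 n := Nat.prime_two.coprime_iff_not_dvd.mpr (by
      intro hdvd
      rcases hodd with ⟨t, ht⟩
      omega)
    exact h2.symm
  set DD : ℕ := Nat.dist A B with hDDdef
  have hgcdND : Nat.gcd N DD = m := by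
    rcases lt_trichotomy s (n - s) with hsk | hsk | hsk
    · -- s < n - s
      have hsn' : s < n := by omega
      have hle : q ^ s ≤ q ^ (n - s) := Nat.pow_le_pow_right (by omega) hsk.le
      have hDDeq : DD = q ^ s * (q ^ (n - s - s) - 1) := by
        have h2 : q ^ s * (q ^ (n - s - s) - 1) = q ^ (n - s) - q ^ s := by
          rw [Nat.mul_sub, mul_one, ← pow_add]
          congr 2
          omega
        rw [hDDdef, hA, hB, Nat.dist_eq_sub_of_le (by omega), h2]
        omega
      have hcopq : Nat.Coprime (q ^ s) N := Nat.Coprime.pow_left s hcopNq.symm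
      rw [hDDeq, Nat.Coprime.gcd_mul_left_cancel_right _ hcopq, hN,
        aux_gcd_pow_sub_one q hq2 n (n - s - s)]
      have hgone : Nat.gcd n (n - s - s) = 1 := by
        have hdvd : Nat.gcd n (n - s - s) ∣ 2 * s := by
          have h1 : Nat.gcd n (n - s - s) ∣ n := Nat.gcd_dvd_left _ _
          have h2 : Nat.gcd n (n - s - s) ∣ n - s - s := Nat.gcd_dvd_right _ _
          have h3 : n - (n - s - s) = 2 * s := by omega
          exact h3 ▸ Nat.dvd_sub h1 h2
        have hcop2s : Nat.Coprime n (2 * s) := Nat.Coprime.mul_right hcop2 hsn.symm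
        exact Nat.dvd_one.mp (hcop2s ▸ Nat.dvd_gcd (Nat.gcd_dvd_left _ _) hdvd)
      rw [hgone, pow_one, hm]
    · -- impossible: n = 2 s
      exfalso
      rcases hodd with ⟨t, ht⟩
      omega
    · -- n - s < s
      have hle : q ^ (n - s) ≤ q ^ s := Nat.pow_le_pow_right (by omega) hsk.le
      have hDDeq : DD = q ^ (n - s) * (q ^ (s - (n - s)) - 1) := by
        have h2 : q ^ (n - s) * (q ^ (s - (n - s)) - 1) = q ^ s - q ^ (n - s) := by
          rw [Nat.mul_sub, mul_one, ← pow_add]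
          congr 2
          omega
        rw [hDDdef, hA, hB, Nat.dist_comm, Nat.dist_eq_sub_of_le (by omega), h2]
        omega
      have hcopq : Nat.Coprime (q ^ (n - s)) N := Nat.Coprime.pow_left _ hcopNq.symm
      rw [hDDeq, Nat.Coprime.gcd_mul_left_cancel_right _ hcopq, hN,
        aux_gcd_pow_sub_one q hq2 n (s - (n - s))]
      have hgone : Nat.gcd n (s - (n - s)) = 1 := by
        rcases le_or_gt s n with hsn2 | hsn2
        · have hdvd : Nat.gcd n (s - (n - s)) ∣ 2 * s := by
            have h1 : Nat.gcd n (s - (n - s)) ∣ n := Nat.gcd_dvd_left _ _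
            have h2 : Nat.gcd n (s - (n - s)) ∣ s - (n - s) := Nat.gcd_dvd_right _ _
            have h3 : (s - (n - s)) + n = 2 * s := by omega
            exact h3 ▸ Nat.dvd_add h2 h1
          have hcop2s : Nat.Coprime n (2 * s) := Nat.Coprime.mul_right hcop2 hsn.symm
          exact Nat.dvd_one.mp (hcop2s ▸ Nat.dvd_gcd (Nat.gcd_dvd_left _ _) hdvd)
        · have h3 : s - (n - s) = s := by omega
          rw [h3]
          exact hsn.symm
      rw [hgone, pow_one, hm]
  have hmDD : m ∣ DD := hgcdND ▸ Nat.gcd_dvd_right N DD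
  set w : ℕ := DD / m with hwdef
  have hwm : w * m = DD := Nat.div_mul_cancel hmDD
  have hcopEw : Nat.Coprime E w := by
    have h1 : Nat.gcd (E * m) (w * m) = Nat.gcd E w * m := Nat.gcd_mul_right E m w
    rw [hEm, hwm, hgcdND] at h1
    have h2 : Nat.gcd E w * m = 1 * m := by rw [one_mul, ← h1]
    exact Nat.eq_of_mul_eq_mul_right (by omega) h2
  have hprimU : IsPrimitiveRoot η E := by
    constructor
    · rw [hηdef, mul_pow, inv_pow, ← pow_mul, ← pow_mul]
      obtain ⟨a', ha'⟩ := hmA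
      obtain ⟨b', hb'⟩ := hmB
      have h1 : ξ ^ (A * E) = 1 := by
        rw [← orderOf_dvd_iff_pow_eq_one, horder]
        exact ⟨a', by rw [ha', ← hEm]; ring⟩
      have h2 : ξ ^ (B * E) = 1 := by
        rw [← orderOf_dvd_iff_pow_eq_one, horder]
        exact ⟨b', by rw [hb', ← hEm]; ring⟩
      rw [h1, h2, inv_one, mul_one]
    · intro l hl
      rw [hηdef, mul_pow, inv_pow, ← pow_mul, ← pow_mul] at hl
      have hxi : ξ ^ (A * l) = ξ ^ (B * l) := by
        have h5 : ξ ^ (A * l) * (ξ ^ (B * l))⁻¹ = 1 := hl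
        rwa [mul_inv_eq_one] at h5
      have hmodeq : A * l ≡ B * l [MOD N] := by
        rw [← horder]
        exact pow_eq_pow_iff_modEq.mp hxi
      have hNdvd : N ∣ DD * l := by
        rcases le_total A B with hAB | hAB
        · have h1 : A * l ≤ B * l := Nat.mul_le_mul_right l hAB
          have h6 := (Nat.modEq_iff_dvd' h1).mp hmodeq
          have hd : B * l - A * l = DD * l := by
            rw [hDDdef, Nat.dist_eq_sub_of_le hAB, ← Nat.sub_mul]
          rwa [hd] at h6
        · have h1 : B * l ≤ A * l := Nat.mul_le_mul_right l hAB
          have h6 := (Nat.modEq_iff_dvd' h1).mp hmodeq.symm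
          have hd : A * l - B * l = DD * l := by
            rw [hDDdef, Nat.dist_comm, Nat.dist_eq_sub_of_le hAB, ← Nat.sub_mul]
          rwa [hd] at h6
      have hEdvd : E ∣ w * l := by
        have h7 : E * m ∣ (w * l) * m := by
          rw [hEm]
          have h8 : DD * l = (w * l) * m := by rw [← hwm]; ring
          rwa [h8] at hNdvd
        exact (Nat.mul_dvd_mul_iff_right (by omega : 0 < m)).mp h7
      exact hcopEw.dvd_of_dvd_mul_left hEdvd
  have hprim : IsPrimitiveRoot ((η : F)) E := IsPrimitiveRoot.coe_units_iff.mpr hprimU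
  -- the product over e-th roots of unity
  have hmu : ∀ c : F, ∏ j ∈ Finset.range E, (c + (η : F) ^ j) = 1 + c ^ E := by
    intro c
    have hpoly := X_pow_sub_C_eq_prod hprim (by omega : 0 < E) (one_pow E)
    have hev := congrArg (Polynomial.eval (-c)) hpoly
    simp only [eval_sub, eval_pow, eval_X, eval_C, eval_prod, eval_mul, eval_one,
      mul_one] at hev
    have hrhs : ∏ i ∈ Finset.range E, (-c - (η : F) ^ i)
        = (-1 : F) ^ E * ∏ i ∈ Finset.range E, (c + (η : F) ^ i) := by
      calc ∏ i ∈ Finset.range E, (-c - (η : F) ^ i)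
          = ∏ i ∈ Finset.range E, ((-1 : F) * (c + (η : F) ^ i)) :=
            Finset.prod_congr rfl fun i _ => by ring
        _ = (-1 : F) ^ E * ∏ i ∈ Finset.range E, (c + (η : F) ^ i) := by
            rw [Finset.prod_mul_distrib, Finset.prod_const, Finset.card_range]
    rw [hrhs] at hev
    have hn1 : ((-1 : F)) ^ E = -1 := hEodd.neg_one_pow
    have hnc : ((-c : F)) ^ E = -(c ^ E) := hEodd.neg_pow c
    rw [hn1, hnc] at hev
    linear_combination hev
  -- final computation
  have hcoeη : ∀ j : ℕ, X ^ (j * B) * ((η : F)) ^ j = X ^ (j * A) := by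
    intro j
    have huη : ξ ^ (j * B) * η ^ j = ξ ^ (j * A) := by
      rw [hηdef, mul_pow, inv_pow, ← pow_mul, ← pow_mul, mul_comm A j, mul_comm B j]
      group
    have hval := congrArg Units.val huη
    simpa [Units.val_mul, Units.val_pow_eq_pow_val] using hval
  have hgj : ∀ j, g j = X ^ (j * B) * (θ + (η : F) ^ j) := by
    intro j
    show X ^ (j * A) + θ * X ^ (j * B) = _
    rw [← hcoeη j]
    ring
  have hg'j : ∀ j, g' j = d * (X ^ (j * B) * (δ + (η : F) ^ j)) := by
    intro j
    show d * (X ^ (j * A) + δ * X ^ (j * B)) = _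
    rw [← hcoeη j]
    ring
  have hW : (∏ j ∈ Finset.range E, X ^ (j * B)) ≠ 0 :=
    Finset.prod_ne_zero_iff.mpr fun j _ => pow_ne_zero _ hX0
  have hfinal := hprodEq
  rw [Finset.prod_congr rfl fun j _ => hgj j, Finset.prod_congr rfl fun j _ => hg'j j] at hfinal
  rw [Finset.prod_mul_distrib, hmu θ] at hfinal
  rw [Finset.prod_mul_distrib, Finset.prod_const, Finset.card_range,
    Finset.prod_mul_distrib, hmu δ] at hfinal
  have : 1 + θ ^ E = d ^ E * (1 + δ ^ E) := by
    have h2 : (∏ j ∈ Finset.range E, X ^ (j * B)) * (1 + θ ^ E)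
        = (∏ j ∈ Finset.range E, X ^ (j * B)) * (d ^ E * (1 + δ ^ E)) := by
      rw [hfinal]; ring
    exact mul_left_cancel₀ hW h2
  exact this
end

section
/- Let s and n be coprime positive integers with 1 ≤ s < n/2, and let θ, δ ∈ F_{q^n}^* satisfy N_{q^n/q}(θ) ≠ 1 and N_{q^n/q}(δ) ≠ 1. Set f(x) = x^{q^s} + θ·x^{q^{n−s}} and g(x) = x^{q^s} + δ·x^{q^{n−s}}. If there exists α ∈ F_{q^n}^* such that α^{q^{2s}−1} = (θ/δ)^{q^s}, then there exists d ∈ F_{q^n} such that {f(x)/x : x ∈ F_{q^n}^*} = {d·g(x)/x : x ∈ F_{q^n}^*}. -/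
/-- **A sufficient condition for `L_f = L_{d·g}` for Lunardon–Polverino polynomials.**
If there is `α ∈ F_{q^n}^*` with `α^{q^{2s}-1} = (θ/δ)^{q^s}`, then there exists
`d ∈ F_{q^n}` with `{f(x)/x : x ≠ 0} = {d·g(x)/x : x ≠ 0}`, where
`f(x) = x^{q^s} + θ x^{q^{n-s}}` and `g(x) = x^{q^s} + δ x^{q^{n-s}}`. -/
theorem LP_sufficient_condition (p r q n s : ℕ) (hp : p.Prime) (hr : 0 < r)
    (hq : q = p ^ r) (hs : 0 < s) (hsn : Nat.Coprime s n) (hs2 : 2 * s < n)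
    (F : Type*) [Field F] [Fintype F] (hF : Fintype.card F = q ^ n)
    (θ δ : F) (hθ0 : θ ≠ 0) (hδ0 : δ ≠ 0)
    (hθ1 : θ ^ ((q ^ n - 1) / (q - 1)) ≠ 1) (hδ1 : δ ^ ((q ^ n - 1) / (q - 1)) ≠ 1)
    (hα : ∃ α : F, α ≠ 0 ∧ α ^ (q ^ (2 * s) - 1) = (θ / δ) ^ q ^ s) :
    ∃ d : F,
      {y : F | ∃ x : F, x ≠ 0 ∧ y = (x ^ q ^ s + θ * x ^ q ^ (n - s)) / x} =
      {y : F | ∃ x : F, x ≠ 0 ∧ y = d * (x ^ q ^ s + δ * x ^ q ^ (n - s)) / x} := by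
  obtain ⟨α, hα0, hαeq⟩ := hα
  -- char F = p
  have hn : 0 < n := by omega
  have hcharP : CharP F (ringChar F) := ringChar.charP F
  obtain ⟨m, hrc, hcard⟩ := FiniteField.card F (ringChar F)
  have hpchar : ringChar F = p := by
    have h1 : p ∣ (ringChar F) ^ (m : ℕ) := by
      rw [← hcard, hF, hq, ← pow_mul]
      exact dvd_pow_self p (by positivity)
    have := (Nat.Prime.dvd_of_dvd_pow hp h1)
    exact ((Nat.prime_dvd_prime_iff_eq hp hrc).mp this).symm
  haveI : CharP F p := hpchar ▸ hcharP
  -- injectivity of x ↦ x ^ q ^ s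
  haveI : Fact p.Prime := ⟨hp⟩
  have hfrobinj : Function.Injective (fun x : F => x ^ q ^ s) := by
    intro a b h
    simp only [hq, ← pow_mul] at h
    have h2 : (a - b) ^ p ^ (r * s) = 0 := by
      rw [sub_pow_char_pow]; simpa [sub_eq_zero] using h
    have h3 := pow_eq_zero_iff ((pow_pos hp.pos (r * s)).ne') |>.mp h2
    exact sub_eq_zero.mp h3
  have hq2 : 2 ≤ q := by
    rw [hq]; calc 2 ≤ p := hp.two_le
    _ ≤ p ^ r := Nat.le_self_pow (by omega) p
  -- α ^ q ^ n = α
  have hpowcard : ∀ x : F, x ^ q ^ n = x := fun x => by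
    rw [← hF]; exact FiniteField.pow_card x
  -- key identity: α ^ q ^ (n - s) * θ = α ^ q ^ s * δ
  have hkey : α ^ q ^ (n - s) * θ = α ^ q ^ s * δ := by
    apply hfrobinj
    have h1 : q ^ (n - s) * q ^ s = q ^ n := by
      rw [← pow_add]; congr 1; omega
    have h2 : q ^ s * q ^ s = q ^ (2 * s) := by rw [← pow_add]; congr 1; omega
    have hα2s : α ^ q ^ (2 * s) = (θ / δ) ^ q ^ s * α := by
      have : α ^ (q ^ (2 * s) - 1) * α = α ^ q ^ (2 * s) := by
        rw [← pow_succ]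
        congr 1
        have : 1 ≤ q ^ (2 * s) := Nat.one_le_pow _ _ (by omega)
        omega
      rw [← this, hαeq]
    simp only [mul_pow, ← pow_mul, h1, h2]
    rw [pow_mul] at hα2s ⊢
    rw [hα2s, hpowcard]
    field_simp
    rw [← mul_pow, div_mul_cancel₀ θ hδ0]
  refine ⟨α ^ q ^ s / α, ?_⟩
  ext y
  simp only [Set.mem_setOf_eq]
  constructor
  · rintro ⟨x, hx, rfl⟩
    refine ⟨x / α, div_ne_zero hx hα0, ?_⟩
    have hxa : x / α ≠ 0 := div_ne_zero hx hα0
    rw [div_pow, div_pow]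
    have hαs : α ^ q ^ s ≠ 0 := pow_ne_zero _ hα0
    have hαns : α ^ q ^ (n - s) ≠ 0 := pow_ne_zero _ hα0
    field_simp
    ring_nf
    linear_combination (x ^ q ^ (n - s)) * hkey
  · rintro ⟨x, hx, rfl⟩
    refine ⟨α * x, mul_ne_zero hα0 hx, ?_⟩
    have hαs : α ^ q ^ s ≠ 0 := pow_ne_zero _ hα0
    have hαns : α ^ q ^ (n - s) ≠ 0 := pow_ne_zero _ hα0
    rw [mul_pow, mul_pow]
    field_simp
    ring_nf
    linear_combination (-(x ^ q ^ (n - s))) * hkey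
end

section
/- Let s and n be coprime positive integers and let θ, δ ∈ F_{q^n}^*. There exists α ∈ F_{q^n}^* such that α^{q^{2s}−1} = (θ/δ)^{q^s} if and only if N_{q^n/q}(θ) = N_{q^n/q}(δ) when n is odd, respectively N_{q^n/q²}(θ) = N_{q^n/q²}(δ) when n is even. -/
lemma gcd_pow_sub_one_aux (q : ℕ) (hq : 0 < q) (a b : ℕ) :
    Nat.gcd (q ^ a - 1) (q ^ b - 1) = q ^ Nat.gcd a b - 1 := by
  induction a, b using Nat.gcd.induction with
  | H0 b => simp
  | H1 m n hm ih =>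
    have hm1 : 1 ≤ q ^ m := Nat.one_le_pow _ _ hq
    have hA : 1 ≤ q ^ (n % m) := Nat.one_le_pow _ _ hq
    have h1n : 1 ≤ q ^ n := Nat.one_le_pow _ _ hq
    have hP : 1 ≤ (q ^ m) ^ (n / m) := Nat.one_le_pow _ _ (by positivity)
    obtain ⟨c, hc⟩ := Nat.sub_dvd_pow_sub_pow (q ^ m) 1 (n / m)
    simp only [one_pow] at hc
    have e1 : q ^ n = q ^ (n % m) * (q ^ m) ^ (n / m) := by
      rw [← pow_mul, ← pow_add, Nat.mod_add_div]
    have key : q ^ n - 1 = (q ^ (n % m) - 1) + (c * q ^ (n % m)) * (q ^ m - 1) := by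
      zify [hm1, hA, h1n]
      have e1' : (q : ℤ) ^ n = q ^ (n % m) * ((q ^ m : ℕ) : ℤ) ^ (n / m) := by
        exact_mod_cast e1
      have hc' : ((q ^ m : ℕ) : ℤ) ^ (n / m) - 1 = ((q : ℤ) ^ m - 1) * c := by
        zify [hP, hm1] at hc; exact_mod_cast hc
      push_cast at e1' hc' ⊢
      linear_combination e1' + (q : ℤ) ^ (n % m) * hc'
    rw [key, Nat.gcd_add_mul_right_right, Nat.gcd_comm, ih, ← Nat.gcd_rec]

lemma exists_pow_eq_iff_aux (F : Type*) [Field F] [Fintype F] (k : ℕ) (x : F) (hx : x ≠ 0) :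
    (∃ α : F, α ≠ 0 ∧ α ^ k = x) ↔
      x ^ ((Fintype.card F - 1) / Nat.gcd k (Fintype.card F - 1)) = 1 := by
  classical
  set N := Fintype.card F - 1 with hNdef
  set d := Nat.gcd k N with hddef
  have hN : 0 < N := by
    have := Fintype.one_lt_card (α := F)
    omega
  have hdN : d ∣ N := Nat.gcd_dvd_right _ _
  have hdk : d ∣ k := Nat.gcd_dvd_left _ _
  have hdpos : 0 < d := Nat.gcd_pos_of_pos_right _ hN
  constructor
  · rintro ⟨α, hα0, rfl⟩
    have hmul : k * (N / d) = N * (k / d) := by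
      rw [← Nat.mul_div_assoc k hdN, ← Nat.mul_div_assoc N hdk, mul_comm]
    rw [← pow_mul, hmul, pow_mul, FiniteField.pow_card_sub_one_eq_one α hα0, one_pow]
  · intro h
    set u : Fˣ := Units.mk0 x hx with hu
    have hcard : Fintype.card Fˣ = N := by rw [hNdef, Fintype.card_units]
    have hu1 : u ^ (N / d) = 1 := by
      ext
      push_cast [hu]
      simpa using h
    obtain ⟨g, hg⟩ := IsCyclic.exists_generator (α := Fˣ)
    have hog : orderOf g = N := by
      rw [orderOf_eq_card_of_forall_mem_zpowers hg, Nat.card_eq_fintype_card, hcard]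
    obtain ⟨m, hm⟩ : ∃ m : ℕ, g ^ m = u := by
      have := hg u
      rwa [← mem_powers_iff_mem_zpowers, Submonoid.mem_powers_iff] at this
    have hg1 : g ^ (m * (N / d)) = 1 := by rw [pow_mul, hm, hu1]
    have hNdvd : N ∣ m * (N / d) := by
      have h3 := orderOf_dvd_of_pow_eq_one hg1
      rwa [hog] at h3
    have hepos : 0 < N / d := Nat.div_pos (Nat.le_of_dvd hN hdN) hdpos
    have hdm : d ∣ m := by
      have h2 : d * (N / d) ∣ m * (N / d) := by
        rw [Nat.mul_div_cancel' hdN]; exact hNdvd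
      exact (Nat.mul_dvd_mul_iff_right hepos).mp h2
    obtain ⟨t, ht⟩ := hdm
    have hbez := Nat.gcd_eq_gcd_ab k N
    set a := Nat.gcdA k N with hadef
    set b := Nat.gcdB k N with hbdef
    refine ⟨(((g ^ a) ^ t : Fˣ) : F), Units.ne_zero _, ?_⟩
    have hmc : (m : ℤ) = (d : ℤ) * t := by exact_mod_cast ht
    have hdvdZ : ((N : ℕ) : ℤ) ∣ (a * t * k - m) := by
      refine ⟨-(t * b), ?_⟩
      linear_combination (-1 : ℤ) * hmc + (-(t : ℤ)) * hbez
    have hkey : ((g ^ a) ^ t) ^ k = u := by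
      have h1 : ((g ^ a) ^ t) ^ k = g ^ (a * (t : ℤ) * (k : ℤ)) := by
        rw [← zpow_natCast ((g ^ a) ^ t) k, ← zpow_natCast (g ^ a) t, ← zpow_mul, ← zpow_mul,
          mul_assoc]
      have h2 : u = g ^ ((m : ℤ)) := by rw [← hm, zpow_natCast]
      rw [h1, h2]
      have : g ^ (a * (t : ℤ) * (k : ℤ) - (m : ℤ)) = 1 := by
        rw [← orderOf_dvd_iff_zpow_eq_one] at *
        · rwa [hog]
      rw [zpow_sub] at this
      exact div_eq_one.mp this
    calc (((g ^ a) ^ t : Fˣ) : F) ^ k = ((((g ^ a) ^ t) ^ k : Fˣ) : F) := by push_cast; ring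
    _ = x := by rw [hkey, hu]; rfl

lemma pow_coprime_eq_one_iff_aux (F : Type*) [Field F] [Fintype F] (y : F) (hy : y ≠ 0)
    (m c : ℕ) (hm : Nat.Coprime m (Fintype.card F - 1)) :
    (y ^ m) ^ c = 1 ↔ y ^ c = 1 := by
  classical
  set v : Fˣ := Units.mk0 y hy with hv
  have hvd : orderOf v ∣ Fintype.card F - 1 := by
    rw [← Fintype.card_units]; exact orderOf_dvd_card
  have hco : Nat.Coprime (orderOf v) m := Nat.Coprime.coprime_dvd_left hvd hm.symm
  have heq : ∀ e : ℕ, y ^ e = 1 ↔ orderOf v ∣ e := by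
    intro e
    constructor
    · intro h
      refine orderOf_dvd_of_pow_eq_one ?_
      ext
      simp [hv, h]
    · intro h
      have h1 : v ^ e = 1 := orderOf_dvd_iff_pow_eq_one.mp h
      have h2 := congrArg (Units.val) h1
      simpa [hv] using h2
  rw [← pow_mul, heq, heq]
  constructor
  · intro h
    exact (Nat.Coprime.dvd_of_dvd_mul_left hco) h
  · intro h
    exact Dvd.dvd.mul_left h m

/-- **Hilbert 90 reformulation.** For coprime positive integers `s` and `n` and nonzero
`θ, δ ∈ F_{q^n}`, there exists `α ∈ F_{q^n}^*` with `α^{q^{2s}-1} = (θ/δ)^{q^s}` if and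
only if `N_{q^n/q}(θ) = N_{q^n/q}(δ)` when `n` is odd, respectively
`N_{q^n/q²}(θ) = N_{q^n/q²}(δ)` when `n` is even. -/
theorem exists_alpha_iff_norm_eq (p r q n s : ℕ) (hp : p.Prime) (hr : 0 < r)
    (hq : q = p ^ r) (hn : 0 < n) (hs : 0 < s) (hsn : Nat.Coprime s n)
    (F : Type*) [Field F] [Fintype F] (hF : Fintype.card F = q ^ n)
    (θ δ : F) (hθ0 : θ ≠ 0) (hδ0 : δ ≠ 0) :
    (Odd n →
      ((∃ α : F, α ≠ 0 ∧ α ^ (q ^ (2 * s) - 1) = (θ / δ) ^ q ^ s) ↔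
        θ ^ ((q ^ n - 1) / (q - 1)) = δ ^ ((q ^ n - 1) / (q - 1)))) ∧
    (Even n →
      ((∃ α : F, α ≠ 0 ∧ α ^ (q ^ (2 * s) - 1) = (θ / δ) ^ q ^ s) ↔
        θ ^ ((q ^ n - 1) / (q ^ 2 - 1)) = δ ^ ((q ^ n - 1) / (q ^ 2 - 1)))) := by
  have hq2 : 2 ≤ q := by
    rw [hq]
    calc 2 ≤ p := hp.two_le
    _ ≤ p ^ r := Nat.le_self_pow hr.ne' p
  have hq0 : 0 < q := by omega
  have hx0 : (θ / δ) ^ q ^ s ≠ 0 := pow_ne_zero _ (div_ne_zero hθ0 hδ0)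
  have hNcard : Fintype.card F - 1 = q ^ n - 1 := by rw [hF]
  have hqn1 : 1 ≤ q ^ n := Nat.one_le_pow _ _ hq0
  -- coprimality of q^s with q^n - 1
  have hcoq : Nat.Coprime q (q ^ n - 1) := by
    have h1 : q ^ n - 1 + 1 = q ^ n := Nat.succ_pred_eq_of_pos (by positivity)
    have h2 : Nat.Coprime (q ^ n) (q ^ n - 1) := by
      rw [← h1]; simp
    exact (Nat.coprime_pow_left_iff hn _ _).mp h2
  have hcoqs : Nat.Coprime (q ^ s) (q ^ n - 1) := hcoq.pow_left _
  -- main equivalence for a given divisor exponent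
  have main : ∀ G : ℕ, Nat.gcd (2 * s) n = G →
      ((∃ α : F, α ≠ 0 ∧ α ^ (q ^ (2 * s) - 1) = (θ / δ) ^ q ^ s) ↔
        θ ^ ((q ^ n - 1) / (q ^ G - 1)) = δ ^ ((q ^ n - 1) / (q ^ G - 1))) := by
    intro G hG
    rw [exists_pow_eq_iff_aux F _ _ hx0, hNcard, gcd_pow_sub_one_aux q hq0, hG]
    set e := (q ^ n - 1) / (q ^ G - 1) with hedef
    rw [pow_coprime_eq_one_iff_aux F (θ / δ) (div_ne_zero hθ0 hδ0) _ _ (by rwa [hNcard]),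
      div_pow, div_eq_one_iff_eq (pow_ne_zero _ hδ0)]
  constructor
  · intro hodd
    have h2n : Nat.Coprime 2 n := Nat.coprime_two_left.mpr hodd
    have : Nat.gcd (2 * s) n = 1 := Nat.Coprime.mul h2n hsn
    have := main 1 this
    simpa using this
  · intro heven
    have hGeq : Nat.gcd (2 * s) n = 2 := by
      have h2g : 2 ∣ Nat.gcd (2 * s) n := Nat.dvd_gcd ⟨s, rfl⟩ heven.two_dvd
      have hgs : Nat.Coprime (Nat.gcd (2 * s) n) s :=
        Nat.Coprime.coprime_dvd_left (Nat.gcd_dvd_right _ _) hsn.symm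
      have hg2 : Nat.gcd (2 * s) n ∣ 2 :=
        hgs.dvd_of_dvd_mul_right (Nat.gcd_dvd_left _ _)
      exact Nat.dvd_antisymm hg2 h2g
    exact main 2 hGeq
end

section
/- Let s and n be coprime positive integers and let θ ∈ F_{q^n} satisfy N_{q^n/q}(θ) ∉ {0,1}. Set f(x) = x^{q^s} + θ·x^{q^{n−s}}. Then f is bijective on F_{q^n} if and only if n is even, or n is odd and N_{q^n/q}(θ) ≠ −1. Moreover, if n is odd and N_{q^n/q}(θ) = −1, then f has exactly q roots in F_{q^n}. -/
open Finset Subgroup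

private lemma LP_M_succ (q : ℕ) (hq : 2 ≤ q) (n : ℕ) :
    (q ^ (n + 1) - 1) / (q - 1) = (q ^ n - 1) / (q - 1) + q ^ n := by
  have h1 : 1 ≤ q ^ n := Nat.one_le_pow _ _ (by omega)
  have h : q ^ (n + 1) - 1 = (q ^ n - 1) + q ^ n * (q - 1) := by
    have h2 : 1 ≤ q ^ (n + 1) := Nat.one_le_pow _ _ (by omega)
    zify [h1, h2, (by omega : 1 ≤ q)]
    ring
  rw [h, Nat.add_mul_div_right _ _ (by omega : 0 < q - 1)]

private lemma LP_M_parity (q : ℕ) (hq : 2 ≤ q) (hodd : Odd q) (n : ℕ) :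
    (q ^ n - 1) / (q - 1) % 2 = n % 2 := by
  induction n with
  | zero => simp
  | succ n ih =>
      have hqn : q ^ n % 2 = 1 := Nat.odd_iff.1 (hodd.pow)
      rw [LP_M_succ q hq n]
      omega

private lemma LP_ker {F : Type*} [Field F] [Fintype F] {q C n : ℕ} (hq : 2 ≤ q)
    (hCn : Nat.Coprime C n) (hF : Fintype.card F = q ^ n) (u : Fˣ) :
    u ^ (q ^ C - 1) = 1 ↔ u ^ (q - 1) = 1 := by
  classical
  have hN : Fintype.card Fˣ = q ^ n - 1 := by rw [Fintype.card_units, hF]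
  constructor
  · intro h
    set e := orderOf u with he
    have he1 : e ∣ q ^ C - 1 := orderOf_dvd_of_pow_eq_one h
    have he2 : e ∣ q ^ n - 1 := orderOf_dvd_of_pow_eq_one (by rw [← hN]; exact pow_card_eq_one)
    have hqC : ((q : ZMod e)) ^ C = 1 := by
      have : ((q ^ C : ℕ) : ZMod e) = ((1 : ℕ) : ZMod e) :=
        (ZMod.natCast_eq_natCast_iff _ _ _).2
          ((Nat.modEq_iff_dvd' (Nat.one_le_pow _ _ (by omega))).2 he1).symm
      push_cast at this; exact this
    have hqn : ((q : ZMod e)) ^ n = 1 := by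
      have : ((q ^ n : ℕ) : ZMod e) = ((1 : ℕ) : ZMod e) :=
        (ZMod.natCast_eq_natCast_iff _ _ _).2
          ((Nat.modEq_iff_dvd' (Nat.one_le_pow _ _ (by omega))).2 he2).symm
      push_cast at this; exact this
    have hd : orderOf ((q : ℕ) : ZMod e) ∣ Nat.gcd C n :=
      Nat.dvd_gcd (orderOf_dvd_of_pow_eq_one hqC) (orderOf_dvd_of_pow_eq_one hqn)
    rw [hCn] at hd
    have hq1 : ((q : ℕ) : ZMod e) = ((1 : ℕ) : ZMod e) := by
      have := orderOf_eq_one_iff.1 (Nat.dvd_one.1 hd)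
      push_cast
      exact this
    have hmod : q ≡ 1 [MOD e] := (ZMod.natCast_eq_natCast_iff _ _ _).1 hq1
    exact orderOf_dvd_iff_pow_eq_one.1 ((Nat.modEq_iff_dvd' (by omega)).1 hmod.symm)
  · intro h
    have hdvd : (q - 1) ∣ q ^ C - 1 := by
      simpa using Nat.sub_dvd_pow_sub_pow q 1 C
    exact orderOf_dvd_iff_pow_eq_one.1
      ((orderOf_dvd_of_pow_eq_one h).trans hdvd)

private lemma LP_count {F : Type*} [Field F] [Fintype F] {m k M : ℕ} (a : Fˣ)
    (hk : 0 < k) (hm : 0 < m) (hkM : k * M = Fintype.card F - 1) (hkm : k ∣ m)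
    (hker : ∀ u : Fˣ, u ^ m = 1 ↔ u ^ k = 1)
    (haM : a ^ M = 1) :
    {u : Fˣ | u ^ m = a}.ncard = k := by
  classical
  have hF2 : 1 < Fintype.card F := Fintype.one_lt_card
  have hN : Fintype.card Fˣ = Fintype.card F - 1 := by
    rw [← Nat.card_eq_fintype_card, Nat.card_units, Nat.card_eq_fintype_card]
  have hNpos : 0 < Fintype.card Fˣ := Fintype.card_pos
  have hMpos : 0 < M := by
    rcases Nat.eq_zero_or_pos M with h | h
    · rw [h, Nat.mul_zero] at hkM; omega
    · exact h
  have hKcard : (Finset.univ.filter fun u : Fˣ => u ^ k = 1).card = k := by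
    apply le_antisymm
    · exact IsCyclic.card_pow_eq_one_le hk
    · obtain ⟨g, hg⟩ := IsCyclic.exists_ofOrder_eq_natCard (α := Fˣ)
      rw [Nat.card_eq_fintype_card] at hg
      have hkN : k ∣ Fintype.card Fˣ := ⟨M, by rw [hN, ← hkM]⟩
      have horder : orderOf (g ^ (Fintype.card Fˣ / k)) = k := by
        rw [orderOf_pow, hg, Nat.gcd_eq_right (Nat.div_dvd_of_dvd hkN),
          Nat.div_div_self hkN (by omega : Fintype.card Fˣ ≠ 0)]
      have hsub : (Subgroup.zpowers (g ^ (Fintype.card Fˣ / k)) : Set Fˣ).toFinset ⊆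
          Finset.univ.filter fun u => u ^ k = 1 := by
        intro u hu
        simp only [Set.mem_toFinset, SetLike.mem_coe] at hu
        simp only [Finset.mem_filter, Finset.mem_univ, true_and]
        exact orderOf_dvd_iff_pow_eq_one.1 (horder ▸ orderOf_dvd_of_mem_zpowers hu)
      have hle := Finset.card_le_card hsub
      simp only [Set.toFinset_card, SetLike.coe_sort_coe] at hle
      rwa [Fintype.card_zpowers, horder] at hle
  have hfiber : ∀ b : Fˣ, ∀ u0 : Fˣ, u0 ^ m = b →
      (Finset.univ.filter fun u : Fˣ => u ^ m = b).card =
      (Finset.univ.filter fun u : Fˣ => u ^ m = 1).card := by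
    intro b u0 hu0
    apply Finset.card_bij' (fun v _ => u0⁻¹ * v) (fun z _ => u0 * z)
    · intro v hv
      simp only [Finset.mem_filter, Finset.mem_univ, true_and] at hv ⊢
      rw [mul_pow, hv, inv_pow, hu0, inv_mul_cancel]
    · intro z hz
      simp only [Finset.mem_filter, Finset.mem_univ, true_and] at hz ⊢
      rw [mul_pow, hz, hu0, mul_one]
    · intro v _; rw [mul_inv_cancel_left]
    · intro z _; rw [inv_mul_cancel_left]
  have hKer' : (Finset.univ.filter fun u : Fˣ => u ^ m = 1) =
      (Finset.univ.filter fun u : Fˣ => u ^ k = 1) :=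
    Finset.filter_congr fun u _ => by simp [hker u]
  have himage : (Finset.univ.image fun u : Fˣ => u ^ m).card * k = Fintype.card Fˣ := by
    have h1 := Finset.card_eq_sum_card_image (fun u : Fˣ => u ^ m) Finset.univ
    rw [Finset.card_univ] at h1
    rw [h1, Finset.sum_congr rfl (fun b hb => ?_), Finset.sum_const, smul_eq_mul]
    obtain ⟨u0, _, hu0⟩ := Finset.mem_image.1 hb
    rw [hfiber b u0 hu0, hKer', hKcard]
  have hTsub : (Finset.univ.image fun u : Fˣ => u ^ m) ⊆
      Finset.univ.filter fun v : Fˣ => v ^ M = 1 := by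
    intro b hb
    obtain ⟨u, _, rfl⟩ := Finset.mem_image.1 hb
    simp only [Finset.mem_filter, Finset.mem_univ, true_and]
    obtain ⟨t, ht⟩ := hkm
    have hmM : m * M = Fintype.card Fˣ * t := by
      rw [hN, ← hkM, ht]; ring
    rw [← pow_mul, hmM, pow_mul, pow_card_eq_one, one_pow]
  have hTcard : (Finset.univ.filter fun v : Fˣ => v ^ M = 1).card ≤ M :=
    IsCyclic.card_pow_eq_one_le hMpos
  have himcard : (Finset.univ.image fun u : Fˣ => u ^ m).card = M :=
    Nat.eq_of_mul_eq_mul_left hk (by rw [mul_comm k, himage, hN, hkM])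
  have hTeq : (Finset.univ.filter fun v : Fˣ => v ^ M = 1) =
      Finset.univ.image fun u : Fˣ => u ^ m :=
    (Finset.eq_of_subset_of_card_le hTsub (by rw [himcard]; exact hTcard)).symm
  have ha : a ∈ Finset.univ.image fun u : Fˣ => u ^ m := by
    rw [← hTeq]; simp [haM]
  obtain ⟨u0, _, hu0⟩ := Finset.mem_image.1 ha
  have hset : {u : Fˣ | u ^ m = a} = ↑(Finset.univ.filter fun u : Fˣ => u ^ m = a) := by
    ext u; simp
  rw [hset, Set.ncard_coe_finset, hfiber a u0 hu0, hKer', hKcard]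

/-- **Bijectivity of the Lunardon–Polverino polynomial.**
For `f(x) = x^{q^s} + θ x^{q^{n-s}}` with `gcd(s,n) = 1` and `N(θ) ∉ {0,1}`, the map `f`
is bijective on `F_{q^n}` iff `n` is even, or `n` is odd and `N(θ) ≠ -1`.  Moreover,
if `n` is odd and `N(θ) = -1`, then `f` has exactly `q` roots in `F_{q^n}`. -/
theorem LP_polynomial_bijective_iff (p r q n s : ℕ) (hp : p.Prime) (hr : 0 < r)
    (hq : q = p ^ r) (hn : 0 < n) (hs : 0 < s) (hsn : Nat.Coprime s n)
    (F : Type*) [Field F] [Fintype F] (hF : Fintype.card F = q ^ n)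
    (θ : F)
    (hθ0 : θ ^ ((q ^ n - 1) / (q - 1)) ≠ 0) (hθ1 : θ ^ ((q ^ n - 1) / (q - 1)) ≠ 1) :
    ((Function.Bijective fun x : F => x ^ q ^ s + θ * x ^ q ^ (n - s)) ↔
      (Even n ∨ (Odd n ∧ θ ^ ((q ^ n - 1) / (q - 1)) ≠ -1))) ∧
    (Odd n → θ ^ ((q ^ n - 1) / (q - 1)) = -1 →
      {x : F | x ^ q ^ s + θ * x ^ q ^ (n - s) = 0}.ncard = q) := by
  classical
  have hq2 : 2 ≤ q := by
    rw [hq]; exact Nat.one_lt_pow (by omega) hp.two_le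
  haveI hPF : Fact p.Prime := ⟨hp⟩
  have hcharF : CharP F p := by
    haveI h1 : CharP F (ringChar F) := ringChar.charP F
    obtain ⟨k, hprime, hcard⟩ := FiniteField.card F (ringChar F)
    have hrc : ringChar F = p := by
      have hdvd : ringChar F ∣ p ^ (r * n) := by
        rw [pow_mul, ← hq, ← hF, hcard]
        exact dvd_pow_self _ (by exact_mod_cast k.pos.ne')
      exact (Nat.prime_dvd_prime_iff_eq hprime hp).1 (hprime.dvd_of_dvd_pow hdvd)
    exact hrc ▸ h1
  set M := (q ^ n - 1) / (q - 1) with hMdef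
  have hdvdn : (q - 1) ∣ q ^ n - 1 := by simpa using Nat.sub_dvd_pow_sub_pow q 1 n
  have hMq : M * (q - 1) = q ^ n - 1 := Nat.div_mul_cancel hdvdn
  have hqn2 : q ≤ q ^ n := Nat.le_self_pow hn.ne' q
  have hMpos : 0 < M := Nat.div_pos (by omega) (by omega)
  have hθ : θ ≠ 0 := fun h => hθ0 (by rw [h, zero_pow hMpos.ne'])
  set B := n - s with hBdef
  set C := s + n - B with hCdef
  have hBn : B ≤ n := Nat.sub_le n s
  have hCpos : 0 < C := by omega
  have hqC2 : 2 ≤ q ^ C := by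
    calc 2 ≤ q := hq2
    _ = q ^ 1 := (pow_one q).symm
    _ ≤ q ^ C := Nat.pow_le_pow_right (by omega) hCpos
  set m := q ^ C - 1 with hmdef
  have hmpos : 0 < m := by omega
  have hkm : (q - 1) ∣ m := by
    rw [hmdef]; simpa using Nat.sub_dvd_pow_sub_pow q 1 C
  have hqBne : q ^ B ≠ 0 := (pow_pos (by omega : 0 < q) B).ne'
  have hqsne : q ^ s ≠ 0 := (pow_pos (by omega : 0 < q) s).ne'
  have hxqn : ∀ x : F, x ^ q ^ n = x := fun x => by
    rw [← hF]; exact FiniteField.pow_card x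
  have key : ∀ x : F, (x ^ q ^ B) ^ q ^ C = x ^ q ^ s := fun x => by
    rw [← pow_mul, ← pow_add, show B + C = n + s from by omega, pow_add, pow_mul, hxqn]
  set ψ : F → F := fun y : F => y ^ q ^ (n - B) with hψdef
  have hψφ : ∀ y : F, (ψ y) ^ q ^ B = y := fun y => by
    rw [hψdef]
    rw [← pow_mul, ← pow_add, show n - B + B = n from by omega, hxqn]
  have hφψ : ∀ x : F, ψ (x ^ q ^ B) = x := fun x => by
    show (x ^ q ^ B) ^ q ^ (n - B) = x
    rw [← pow_mul, ← pow_add, show B + (n - B) = n from by omega, hxqn]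
  set S : Set F := {y : F | y ^ q ^ C + θ * y = 0} with hSdef
  set T : Set F := {y : F | y ≠ 0 ∧ y ^ m = -θ} with hTdef
  have hqC1 : q ^ C = m + 1 := by omega
  have hST : S = insert (0 : F) T := by
    ext y
    simp only [hSdef, hTdef, Set.mem_setOf_eq, Set.mem_insert_iff]
    constructor
    · intro h
      rcases eq_or_ne y 0 with rfl | hy
      · exact Or.inl rfl
      · refine Or.inr ⟨hy, ?_⟩
        have h2 : (y ^ m + θ) * y = 0 := by
          rw [add_mul, ← pow_succ, ← hqC1]
          exact h
        rcases mul_eq_zero.1 h2 with h3 | h3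
        · exact eq_neg_of_add_eq_zero_left h3
        · exact absurd h3 hy
    · rintro (rfl | ⟨hy, hym⟩)
      · simp [zero_pow (by omega : q ^ C ≠ 0)]
      · rw [hqC1, pow_succ, hym]; ring
  have hfzero : ∀ x : F, x ^ q ^ s + θ * x ^ q ^ B = 0 ↔ (x ^ q ^ B) ∈ S := fun x => by
    simp only [hSdef, Set.mem_setOf_eq, key x]
  have forward : (∃ y : F, y ≠ 0 ∧ y ^ m = -θ) → Odd n ∧ θ ^ M = -1 := by
    rintro ⟨y, hy, hym⟩
    have hyq : y ^ (q ^ n - 1) = 1 := by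
      have h := FiniteField.pow_card_sub_one_eq_one y hy
      rwa [hF] at h
    have hmM : m * M = (q ^ n - 1) * (m / (q - 1)) := by
      obtain ⟨t, ht⟩ := hkm
      rw [ht, Nat.mul_div_cancel_left t (by omega : 0 < q - 1), ← hMq]
      ring
    have hθM1 : (-θ) ^ M = 1 := by
      calc (-θ) ^ M = (y ^ m) ^ M := by rw [hym]
        _ = (y ^ (q ^ n - 1)) ^ (m / (q - 1)) := by rw [← pow_mul, hmM, pow_mul]
        _ = 1 := by rw [hyq, one_pow]
    have hneg : (-1 : F) ^ M * θ ^ M = 1 := by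
      rw [← mul_pow, neg_one_mul]; exact hθM1
    by_cases hp2 : p = 2
    · haveI : CharP F 2 := by rw [← hp2]; exact hcharF
      rw [show (-1 : F) = 1 from CharTwo.neg_eq 1, one_pow, one_mul] at hneg
      exact absurd hneg hθ1
    · have hqodd : Odd q := by rw [hq]; exact (hp.odd_of_ne_two hp2).pow
      have hpar := LP_M_parity q hq2 hqodd n
      rcases Nat.even_or_odd n with hev | hod
      · have hMeven : Even M := by
          rw [Nat.even_iff]; rw [Nat.even_iff] at hev; omega
        rw [hMeven.neg_one_pow, one_mul] at hneg
        exact absurd hneg hθ1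
      · have hModd : Odd M := by
          rw [Nat.odd_iff]; rw [Nat.odd_iff] at hod; omega
        rw [hModd.neg_one_pow] at hneg
        exact ⟨hod, by linear_combination -hneg⟩
  have hcount : Odd n → θ ^ M = -1 → T.ncard = q - 1 := by
    intro hod hm1
    have hp2 : p ≠ 2 := by
      intro hp2
      haveI : CharP F 2 := by rw [← hp2]; exact hcharF
      exact hθ1 (by rw [hm1, CharTwo.neg_eq])
    have hqodd : Odd q := by rw [hq]; exact (hp.odd_of_ne_two hp2).pow
    have hModd : Odd M := by
      have hpar := LP_M_parity q hq2 hqodd n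
      rw [Nat.odd_iff]; rw [Nat.odd_iff] at hod; omega
    have hCn : Nat.Coprime C n := by
      rcases le_or_gt s n with h | h
      · rw [show C = 2 * s from by omega]
        exact Nat.Coprime.mul (Nat.coprime_two_left.2 hod) hsn
      · rw [show C = s + n from by omega]
        exact Nat.coprime_add_self_left.2 hsn
    set a : Fˣ := -(Units.mk0 θ hθ) with hadef
    have haval : (a : F) = -θ := by simp [hadef]
    have haM : a ^ M = 1 := by
      apply Units.ext
      rw [Units.val_pow_eq_pow_val, haval, Units.val_one]
      calc (-θ) ^ M = (-1 : F) ^ M * θ ^ M := by rw [← neg_one_mul θ, mul_pow]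
        _ = 1 := by rw [hModd.neg_one_pow, hm1]; ring
    have hker : ∀ u : Fˣ, u ^ m = 1 ↔ u ^ (q - 1) = 1 := fun u => by
      rw [hmdef]; exact LP_ker hq2 hCn hF u
    have hcnt := LP_count a (by omega : 0 < q - 1) hmpos
      (by rw [hF, mul_comm, hMq]) hkm hker haM
    have hTim : T = (fun u : Fˣ => (u : F)) '' {u : Fˣ | u ^ m = a} := by
      ext y
      simp only [hTdef, Set.mem_setOf_eq, Set.mem_image]
      constructor
      · rintro ⟨hy, hym⟩
        refine ⟨Units.mk0 y hy, ?_, rfl⟩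
        apply Units.ext
        rw [Units.val_pow_eq_pow_val, haval]
        exact hym
      · rintro ⟨u, hu, rfl⟩
        refine ⟨u.ne_zero, ?_⟩
        rw [← Units.val_pow_eq_pow_val, hu, haval]
    rw [hTim, Set.ncard_image_of_injective _ Units.val_injective]
    exact hcnt
  have hzero : {x : F | x ^ q ^ s + θ * x ^ q ^ B = 0} = ψ '' S := by
    ext x
    simp only [Set.mem_setOf_eq, Set.mem_image]
    rw [hfzero x]
    constructor
    · intro h; exact ⟨x ^ q ^ B, h, hφψ x⟩
    · rintro ⟨y, hy, rfl⟩
      rw [hψφ y]; exact hy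
  have hψinj : Function.Injective ψ := fun y1 y2 h12 => by
    rw [← hψφ y1, ← hψφ y2, h12]
  have hncard : Odd n → θ ^ M = -1 →
      {x : F | x ^ q ^ s + θ * x ^ q ^ B = 0}.ncard = q := by
    intro hod hm1
    rw [hzero, Set.ncard_image_of_injective _ hψinj, hST,
      Set.ncard_insert_of_notMem (fun h => h.1 rfl) (Set.toFinite T),
      hcount hod hm1]
    omega
  refine ⟨?_, hncard⟩
  by_cases hcase : Odd n ∧ θ ^ M = -1
  · obtain ⟨hod, hm1⟩ := hcase
    have hTne : T.Nonempty := by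
      apply Set.nonempty_of_ncard_ne_zero
      rw [hcount hod hm1]; omega
    obtain ⟨y, hy, hym⟩ := hTne
    constructor
    · intro hbij
      exfalso
      have hx0 : ψ y ≠ 0 := by
        intro h0
        apply hy
        rw [← hψφ y, h0, zero_pow hqBne]
      have hfy : ψ y ^ q ^ s + θ * (ψ y) ^ q ^ B = 0 := by
        rw [hfzero (ψ y), hψφ y, hST]
        exact Set.mem_insert_of_mem _ ⟨hy, hym⟩
      have h00 : (0 : F) ^ q ^ s + θ * (0 : F) ^ q ^ B = 0 := by
        rw [zero_pow hqsne, zero_pow hqBne,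
          mul_zero, add_zero]
      exact hx0 (hbij.1 (hfy.trans h00.symm))
    · intro hrhs
      exfalso
      rcases hrhs with hev | ⟨_, hne⟩
      · exact (Nat.not_even_iff_odd.2 hod) hev
      · exact hne hm1
  · have hinj : Function.Injective fun x : F => x ^ q ^ s + θ * x ^ q ^ B := by
      intro x1 x2 h12
      simp only at h12
      by_contra hne
      have hx : x1 - x2 ≠ 0 := sub_ne_zero.2 hne
      have e1 : (x1 - x2) ^ q ^ s = x1 ^ q ^ s - x2 ^ q ^ s := by
        rw [hq, ← pow_mul]
        exact sub_pow_char_pow (p := p) x1 x2 (r * s)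
      have e2 : (x1 - x2) ^ q ^ B = x1 ^ q ^ B - x2 ^ q ^ B := by
        rw [hq, ← pow_mul]
        exact sub_pow_char_pow (p := p) x1 x2 (r * B)
      have hfx : (x1 - x2) ^ q ^ s + θ * (x1 - x2) ^ q ^ B = 0 := by
        rw [e1, e2]
        linear_combination h12
      have hmem : ((x1 - x2) ^ q ^ B) ∈ S := (hfzero _).1 hfx
      rw [hST] at hmem
      rcases hmem with h0 | hT
      · exact hx ((pow_eq_zero_iff hqBne).1 h0)
      · exact hcase (forward ⟨_, hT.1, hT.2⟩)
    refine iff_of_true (Finite.injective_iff_bijective.1 hinj) ?_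
    rcases Nat.even_or_odd n with hev | hod
    · exact Or.inl hev
    · exact Or.inr ⟨hod, fun h => hcase ⟨hod, h⟩⟩
end

section
/- Let p be a prime, let r be a positive integer, and let F(r) be the set of x ∈ F_{p^r} lying in no proper subfield of F_{p^r}. If there exist x ∈ F(r) and an integer k with 0 ≤ k < r such that x^{p^k+1} = 1, then either r = 1 and k = 0, or r is even and k = r/2. -/
/-- The set of elements of `F_{p^m}` lying in no proper subfield: an element lies in the
subfield with `p^d` elements (`d ∣ m`) iff it is fixed by the `d`-th power of the
Frobenius, i.e. `x^(p^d) = x`. -/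
def noProperSubfield (p m : ℕ) [Fact p.Prime] : Set (GaloisField p m) :=
  {x | ∀ d : ℕ, d ∣ m → d < m → x ^ p ^ d ≠ x}

/-- **Lemma on `x^{p^k+1} = 1` for elements in no proper subfield.**
If `x ∈ F(r)` and `0 ≤ k < r` satisfy `x^{p^k+1} = 1`, then either `r = 1` and
`k = 0`, or `r` is even and `k = r/2`. -/
theorem subfield_power_condition (p r : ℕ) [Fact p.Prime] (hr : 0 < r)
    (x : GaloisField p r) (hx : x ∈ noProperSubfield p r)
    (k : ℕ) (hk : k < r) (h : x ^ (p ^ k + 1) = 1) :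
    (r = 1 ∧ k = 0) ∨ (Even r ∧ 2 * k = r) := by
  have hp : p.Prime := Fact.out
  have hx0 : x ≠ 0 := by
    intro h0
    rw [h0, zero_pow (by positivity)] at h
    exact zero_ne_one h
  by_cases hk0 : k = 0
  · -- k = 0 : x^2 = 1, show r = 1
    subst hk0
    left
    refine ⟨?_, rfl⟩
    by_contra hr1
    have h1r : 1 < r := lt_of_le_of_ne hr (Ne.symm hr1)
    apply hx 1 (one_dvd r) h1r
    rw [pow_one]
    have h2 : x ^ 2 = 1 := by simpa using h
    rcases sq_eq_one_iff.mp h2 with rfl | rfl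
    · exact one_pow p
    · rcases hp.eq_two_or_odd' with rfl | hodd
      · -- char 2 : -1 = 1
        rw [CharTwo.neg_eq 1, one_pow]
      · exact hodd.neg_one_pow
  · -- k ≥ 1
    have hx2k : x ^ p ^ (2 * k) = x := by
      have hxk : x ^ p ^ k = x⁻¹ := by
        have : x ^ p ^ k * x = 1 := by rw [← pow_succ]; exact h
        field_simp at this ⊢
        linear_combination this
      calc x ^ p ^ (2 * k) = (x ^ p ^ k) ^ p ^ k := by
            rw [← pow_mul, two_mul, pow_add]
        _ = x := by rw [hxk, inv_pow, hxk, inv_inv]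
    -- order of x divides p^(2k) - 1 and p^r - 1
    have hN1 : orderOf x ∣ p ^ (2 * k) - 1 := by
      apply orderOf_dvd_of_pow_eq_one
      have hpos : 1 ≤ p ^ (2 * k) := Nat.one_le_pow _ _ hp.pos
      have : x ^ (p ^ (2 * k) - 1) * x = x := by
        rw [← pow_succ, Nat.sub_add_cancel hpos, hx2k]
      exact mul_right_cancel₀ hx0 (by rw [this, one_mul])
    have : Fintype (GaloisField p r) := Fintype.ofFinite _
    have hcard : Fintype.card (GaloisField p r) = p ^ r := by
      rw [← Nat.card_eq_fintype_card, GaloisField.card p r hr.ne']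
    have hN2 : orderOf x ∣ p ^ r - 1 := by
      apply orderOf_dvd_of_pow_eq_one
      rw [← hcard]
      exact FiniteField.pow_card_sub_one_eq_one x hx0
    -- in ZMod (orderOf x), p^(2k) = 1 and p^r = 1, hence p^gcd = 1
    set N := orderOf x with hNdef
    have hmod1 : (p : ZMod N) ^ (2 * k) = 1 := by
      have := (Nat.modEq_iff_dvd' (Nat.one_le_pow _ _ hp.pos)).mpr hN1
      have := (ZMod.natCast_eq_natCast_iff _ _ _).mpr this.symm
      push_cast at this
      exact this
    have hmod2 : (p : ZMod N) ^ r = 1 := by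
      have := (Nat.modEq_iff_dvd' (Nat.one_le_pow _ _ hp.pos)).mpr hN2
      have := (ZMod.natCast_eq_natCast_iff _ _ _).mpr this.symm
      push_cast at this
      exact this
    have hgcd : (p : ZMod N) ^ Nat.gcd (2 * k) r = 1 := pow_gcd_eq_one.mpr ⟨hmod1, hmod2⟩
    set g := Nat.gcd (2 * k) r with hgdef
    have hNg : N ∣ p ^ g - 1 := by
      have : ((p ^ g : ℕ) : ZMod N) = ((1 : ℕ) : ZMod N) := by push_cast; simpa using hgcd
      have := (ZMod.natCast_eq_natCast_iff _ _ _).mp this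
      exact (Nat.modEq_iff_dvd' (Nat.one_le_pow _ _ hp.pos)).mp this.symm
    have hxg : x ^ p ^ g = x := by
      have h1 : x ^ (p ^ g - 1) = 1 := orderOf_dvd_iff_pow_eq_one.mp hNg
      calc x ^ p ^ g = x ^ (p ^ g - 1) * x := by
            rw [← pow_succ, Nat.sub_add_cancel (Nat.one_le_pow _ _ hp.pos)]
        _ = x := by rw [h1, one_mul]
    -- g divides r and x^(p^g) = x, so g = r
    have hgr : g = r := by
      by_contra hne
      exact hx g (Nat.gcd_dvd_right _ _) (lt_of_le_of_ne (Nat.le_of_dvd hr (Nat.gcd_dvd_right _ _)) hne) hxg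
    have hrdvd : r ∣ 2 * k := hgr ▸ Nat.gcd_dvd_left _ _
    obtain ⟨m, hm⟩ := hrdvd
    have hk1 : 1 ≤ k := Nat.one_le_iff_ne_zero.mpr hk0
    have hm1 : m = 1 := by nlinarith
    right
    subst hm1
    rw [mul_one] at hm
    exact ⟨⟨k, by omega⟩, hm⟩
end

section
/- Let p be a prime and r a positive integer, and let K(r) = {x ∈ F(r) : x^{p^k+1} = 1 for some integer k with 0 ≤ k < r}. Then: (i) if r = 1, |K(r)| = 2 when p is odd and |K(r)| = 1 when p = 2; (ii) if r is odd and r > 1, |K(r)| = 0; (iii) if r = 2^{s₁} with s₁ ≥ 1, |K(r)| = p^{r/2} − 1 when p is odd and |K(r)| = p^{r/2} when p = 2; (iv) if r is even and r has at least one odd prime divisor, with distinct odd prime divisors r₂ < r₃ < ⋯ < r_ℓ, then |K(r)| = p^{r/2} − Σ_{2 ≤ i ≤ ℓ} p^{r/(2r_i)} + Σ_{2 ≤ i < j ≤ ℓ} p^{r/(2 r_i r_j)} − ⋯ + (−1)^{ℓ−1} p^{r/(2 r₂ r₃ ⋯ r_ℓ)} (the alternating inclusion–exclusion sum over products of distinct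 odd prime divisors of r). -/
/-- `K(m)`: elements of `F(m)` satisfying `x^{p^k+1} = 1` for some `0 ≤ k < m`. -/
def Kset (p m : ℕ) [Fact p.Prime] : Set (GaloisField p m) :=
  {x | x ∈ noProperSubfield p m ∧ ∃ k : ℕ, k < m ∧ x ^ (p ^ k + 1) = 1}

set_option linter.unusedSectionVars false
set_option linter.unusedVariables false


open Finset Polynomial

section CountLemma

variable {F : Type*} [Field F] [Fintype F] [DecidableEq F]

lemma card_pow_eq_one_eq (n : ℕ) (hn : 0 < n) (hd : n ∣ Fintype.card F - 1) :
    (Finset.univ.filter (fun x : F => x ^ n = 1)).card = n := by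
  obtain ⟨g, hg⟩ := IsCyclic.exists_ofOrder_eq_natCard (α := Fˣ)
  rw [Nat.card_eq_fintype_card, Fintype.card_units] at hg
  have hq : 1 < Fintype.card F := Fintype.one_lt_card
  have hg0 : orderOf g ≠ 0 := by rw [hg]; omega
  have hdvd : n ∣ orderOf g := by rw [hg]; exact hd
  have hζ : orderOf (g ^ (orderOf g / n)) = n := orderOf_pow_orderOf_div hg0 hdvd
  have hprim : IsPrimitiveRoot ((g ^ (orderOf g / n) : Fˣ) : F) n := by
    have h0 := IsPrimitiveRoot.orderOf (g ^ (orderOf g / n))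
    rw [hζ] at h0
    exact IsPrimitiveRoot.coe_units_iff.mpr h0
  have hset : Finset.univ.filter (fun x : F => x ^ n = 1) = (nthRoots n (1 : F)).toFinset := by
    ext x
    simp [Polynomial.mem_nthRoots hn]
  rw [hset, Multiset.toFinset_card_of_nodup (hprim.nthRoots_nodup one_ne_zero),
    hprim.card_nthRoots_one]

lemma pow_gcd_eq_one_iff {M : Type*} [Monoid M] (x : M) (a b : ℕ) :
    x ^ Nat.gcd a b = 1 ↔ x ^ a = 1 ∧ x ^ b = 1 := by
  constructor
  · intro h
    constructor
    · obtain ⟨c, hc⟩ := Nat.gcd_dvd_left a b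
      rw [hc, pow_mul, h, one_pow]
    · obtain ⟨c, hc⟩ := Nat.gcd_dvd_right a b
      rw [hc, pow_mul, h, one_pow]
  · rintro ⟨h1, h2⟩
    exact orderOf_dvd_iff_pow_eq_one.mp
      (Nat.dvd_gcd (orderOf_dvd_of_pow_eq_one h1) (orderOf_dvd_of_pow_eq_one h2))

end CountLemma


section Frob

variable {p : ℕ} [Fact p.Prime] {F : Type*} [Field F] [CharP F p]

lemma pow_p_pow_inj (k : ℕ) : Function.Injective (fun x : F => x ^ p ^ k) := by
  induction k with
  | zero => intro a b h; simpa using h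
  | succ k ih =>
    intro a b h
    simp only [pow_succ, pow_mul] at h
    have := frobenius_inj F p (by simpa [frobenius_def] using h : frobenius F p (a ^ p ^ k) = frobenius F p (b ^ p ^ k))
    exact ih this

lemma frob_mul (x : F) (a t : ℕ) (h : x ^ p ^ a = x) : x ^ p ^ (a * t) = x := by
  induction t with
  | zero => simp
  | succ t iht =>
    have : x ^ p ^ (a * (t + 1)) = (x ^ p ^ (a * t)) ^ p ^ a := by
      rw [← pow_mul, ← pow_add, Nat.mul_add, Nat.mul_one]
    rw [this, iht, h]

lemma frob_dvd (x : F) {a b : ℕ} (hab : a ∣ b) (h : x ^ p ^ a = x) : x ^ p ^ b = x := by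
  obtain ⟨t, rfl⟩ := hab
  exact frob_mul x a t h

lemma frob_sub (x : F) (m n : ℕ) (h : x ^ p ^ (m + n) = x) (h2 : x ^ p ^ n = x) :
    x ^ p ^ m = x := by
  apply pow_p_pow_inj (p := p) n
  simp only
  rw [← pow_mul, ← pow_add, h, h2]

lemma frob_gcd : ∀ a b : ℕ, ∀ x : F, x ^ p ^ a = x → x ^ p ^ b = x →
    x ^ p ^ Nat.gcd a b = x := by
  intro a
  induction a using Nat.strong_induction_on with
  | _ a ih =>
    intro b x hxa hxb
    rcases Nat.eq_zero_or_pos a with rfl | ha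
    · simpa [Nat.gcd_zero_left] using hxb
    · rw [Nat.gcd_rec]
      refine ih (b % a) (Nat.mod_lt _ ha) a x ?_ hxa
      have hdiv : x ^ p ^ (a * (b / a)) = x := frob_mul x a (b / a) hxa
      have hsum : b % a + a * (b / a) = b := Nat.mod_add_div b a
      exact frob_sub x (b % a) (a * (b / a)) (by rw [hsum]; exact hxb) hdiv

end Frob


lemma NT_sub_dvd {p d m : ℕ} (hdm : d ∣ m) : p ^ d - 1 ∣ p ^ m - 1 := by
  obtain ⟨c, rfl⟩ := hdm
  have := Nat.sub_dvd_pow_sub_pow (p ^ d) 1 c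
  simpa [← pow_mul] using this

lemma NT_a {p d m : ℕ} (hp : p.Prime) (hd : 0 < d) (hdm : d ∣ m) :
    Nat.gcd (p ^ d - 1) (p ^ m + 1) = if p = 2 then 1 else 2 := by
  have hp2 : 2 ≤ p := hp.two_le
  have h1d : 1 ≤ p ^ d := Nat.one_le_pow _ _ (by omega)
  have h1m : 1 ≤ p ^ m := Nat.one_le_pow _ _ (by omega)
  set D := Nat.gcd (p ^ d - 1) (p ^ m + 1) with hD
  have hDl : D ∣ p ^ d - 1 := Nat.gcd_dvd_left _ _
  have hDr : D ∣ p ^ m + 1 := Nat.gcd_dvd_right _ _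
  have hDm : D ∣ p ^ m - 1 := hDl.trans (NT_sub_dvd hdm)
  have hD2 : D ∣ 2 := by
    have := Nat.dvd_sub hDr hDm
    have he : p ^ m + 1 - (p ^ m - 1) = 2 := by omega
    rwa [he] at this
  rcases hp.eq_two_or_odd' with rfl | hodd
  · -- p = 2 : D is odd
    rw [if_pos rfl]
    have h2d : 2 ∣ 2 ^ d := dvd_pow_self 2 (by omega)
    rcases (Nat.dvd_prime Nat.prime_two).mp hD2 with h | h
    · exact h
    · exfalso
      obtain ⟨u, hu⟩ := h ▸ hDl
      obtain ⟨v, hv⟩ := h2d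
      omega
  · rw [if_neg (by rintro rfl; exact (by norm_num : ¬ Odd 2) hodd)]
    have hod : Odd (p ^ d) := hodd.pow
    have hom : Odd (p ^ m) := hodd.pow
    refine Nat.dvd_antisymm hD2 (Nat.dvd_gcd ?_ ?_)
    · obtain ⟨t, ht⟩ := hod; omega
    · obtain ⟨t, ht⟩ := hom; omega

lemma NT_b {p d' c : ℕ} (hp : 2 ≤ p) (hc : Odd c) :
    Nat.gcd (p ^ (2 * d') - 1) (p ^ (d' * c) + 1) = p ^ d' + 1 := by
  have h1d : 1 ≤ p ^ d' := Nat.one_le_pow _ _ (by omega)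
  have h1dd : 1 ≤ p ^ (2 * d') := Nat.one_le_pow _ _ (by omega)
  have h1m : 1 ≤ p ^ (d' * c) := Nat.one_le_pow _ _ (by omega)
  set A := p ^ (2 * d') - 1 with hA
  set B := p ^ (d' * c) + 1 with hB
  refine Nat.dvd_antisymm ?_ (Nat.dvd_gcd ?_ ?_)
  · -- gcd ∣ p^d' + 1, via ℤ
    obtain ⟨q, hq⟩ := hc
    set D := Nat.gcd A B with hDdef
    have hDA : (D : ℤ) ∣ (p : ℤ) ^ (2 * d') - 1 := by
      have := Int.natCast_dvd_natCast.mpr (Nat.gcd_dvd_left A B)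
      rwa [hA, Nat.cast_sub h1dd, Nat.cast_pow, Nat.cast_one] at this
    have hDB : (D : ℤ) ∣ (p : ℤ) ^ (d' * c) + 1 := by
      have := Int.natCast_dvd_natCast.mpr (Nat.gcd_dvd_right A B)
      rwa [hB, Nat.cast_add, Nat.cast_pow, Nat.cast_one] at this
    have h2 : (D : ℤ) ∣ (p : ℤ) ^ (2 * d' * q) - 1 := by
      refine hDA.trans ?_
      have := sub_dvd_pow_sub_pow ((p : ℤ) ^ (2 * d')) 1 q
      simpa [← pow_mul] using this
    have h3 : (D : ℤ) ∣ (p : ℤ) ^ (d' * c) - (p : ℤ) ^ d' := by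
      have h4 := h2.mul_left ((p : ℤ) ^ d')
      have he : (p : ℤ) ^ d' * ((p : ℤ) ^ (2 * d' * q) - 1)
          = (p : ℤ) ^ (d' * c) - (p : ℤ) ^ d' := by
        rw [mul_sub, mul_one, ← pow_add]
        congr 2
        rw [hq]; ring
      rwa [he] at h4
    have h5 : (D : ℤ) ∣ (p : ℤ) ^ d' + 1 := by
      have := dvd_sub hDB h3
      have he : (p : ℤ) ^ (d' * c) + 1 - ((p : ℤ) ^ (d' * c) - (p : ℤ) ^ d')
          = (p : ℤ) ^ d' + 1 := by ring
      rwa [he] at this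
    exact Int.natCast_dvd_natCast.mp (by push_cast; exact h5)
  · -- p^d' + 1 ∣ p^(2d') - 1
    obtain ⟨y, hy⟩ : ∃ y, p ^ d' = y + 1 := ⟨p ^ d' - 1, by omega⟩
    refine ⟨y, ?_⟩
    rw [hA, two_mul, pow_add, hy]
    have e1 : (y + 1) * (y + 1) = y * y + 2 * y + 1 := by ring
    have e2 : (y + 1 + 1) * y = y * y + 2 * y := by ring
    omega
  · have := (Odd.nat_add_dvd_pow_add_pow (p ^ d') 1 hc)
    simpa [← pow_mul] using this

lemma div_dvd_div_nat {a b n : ℕ} (ha : 0 < a) (hb : 0 < b) (hab : a ∣ b) (hbn : b ∣ n) :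
    n / b ∣ n / a := by
  obtain ⟨u, rfl⟩ := hab
  obtain ⟨v, rfl⟩ := hbn
  rw [Nat.mul_div_cancel_left _ hb, mul_assoc, Nat.mul_div_cancel_left _ ha]
  exact dvd_mul_left v u

noncomputable section Galois

open Finset

variable (p r : ℕ) [hp : Fact p.Prime]

instance : Fintype (GaloisField p r) := Fintype.ofFinite _

instance : DecidableEq (GaloisField p r) := Classical.decEq _

lemma Gcard (hr : r ≠ 0) : Fintype.card (GaloisField p r) = p ^ r := by
  rw [← Nat.card_eq_fintype_card]
  exact GaloisField.card p r hr

lemma frob_r (hr : r ≠ 0) (x : GaloisField p r) : x ^ p ^ r = x := by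
  have := FiniteField.pow_card x
  rwa [Gcard p r hr] at this

/-- the finset of `x` in the subfield of size `p^d` with `x^(p^(r/2)+1) = 1`. -/
def Afin (d : ℕ) : Finset (GaloisField p r) :=
  univ.filter (fun x => x ^ p ^ d = x ∧ x ^ (p ^ (r / 2) + 1) = 1)

def Kfin : Finset (GaloisField p r) :=
  (Afin p r r).filter (fun x => ∀ s ∈ r.primeFactors, x ^ p ^ (r / s) ≠ x)

lemma noProper_iff (hr0 : 0 < r) (x : GaloisField p r) :
    x ∈ noProperSubfield p r ↔ ∀ s ∈ r.primeFactors, x ^ p ^ (r / s) ≠ x := by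
  constructor
  · intro h s hs
    have hsp : s.Prime := Nat.prime_of_mem_primeFactors hs
    exact h (r / s) (Nat.div_dvd_of_dvd (Nat.dvd_of_mem_primeFactors hs))
      (Nat.div_lt_self hr0 hsp.one_lt)
  · intro h d hdvd hlt hxd
    have hd0 : 0 < d := Nat.pos_of_dvd_of_pos hdvd hr0
    have h1 : 1 < r / d := by
      obtain ⟨c, hc⟩ := hdvd
      rcases Nat.lt_or_ge c 2 with hc2 | hc2
      · interval_cases c <;> omega
      · have : r / d = c := by rw [hc, Nat.mul_div_cancel_left _ hd0]
        omega
    obtain ⟨s, hs, hsd⟩ := Nat.exists_prime_and_dvd (by omega : r / d ≠ 1)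
    have hsr : s ∈ r.primeFactors :=
      Nat.mem_primeFactors.mpr ⟨hs, hsd.trans (Nat.div_dvd_of_dvd hdvd), by omega⟩
    apply h s hsr
    -- d ∣ r / s
    obtain ⟨t, ht⟩ := hsd
    have hrd : r = d * (s * t) := by
      rw [← ht, Nat.mul_div_cancel' hdvd]
    have hds : d ∣ r / s := by
      refine ⟨t, ?_⟩
      rw [hrd, show d * (s * t) = s * (d * t) by ring, Nat.mul_div_cancel_left _ hs.pos]
    exact frob_dvd x hds hxd

lemma key_2k (hr1 : 1 < r) (x : GaloisField p r) (h1 : x ∈ noProperSubfield p r) {k : ℕ}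
    (hk : k < r) (hxk : x ^ (p ^ k + 1) = 1) : 2 * k = r := by
  have hr0 : r ≠ 0 := by omega
  have hx0 : x ≠ 0 := by
    rintro rfl
    rw [zero_pow (by positivity)] at hxk
    exact one_ne_zero hxk.symm
  rw [pow_add, pow_one] at hxk
  have hinv : x ^ p ^ k = x⁻¹ := eq_inv_of_mul_eq_one_left hxk
  have h2k : x ^ p ^ (2 * k) = x := by
    have e : x ^ p ^ (2 * k) = (x ^ p ^ k) ^ p ^ k := by
      rw [← pow_mul, ← pow_add, two_mul]
    rw [e, hinv, inv_pow, hinv, inv_inv]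
  have hg := frob_gcd (2 * k) r x h2k (frob_r p r hr0 x)
  have hgr : Nat.gcd (2 * k) r = r := by
    by_contra hne
    have hle : Nat.gcd (2 * k) r ≤ r := Nat.le_of_dvd (by omega) (Nat.gcd_dvd_right _ _)
    exact h1 _ (Nat.gcd_dvd_right _ _) (lt_of_le_of_ne hle hne) hg
  have hrdvd : r ∣ 2 * k := hgr ▸ Nat.gcd_dvd_left _ _
  rcases Nat.eq_zero_or_pos k with rfl | hk0
  · exfalso
    have hx2 : x * x = 1 := by simpa using hxk
    have hxor : x = 1 ∨ x = -1 := by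
      have h0 : (x - 1) * (x + 1) = 0 := by
        have : (x - 1) * (x + 1) = x * x - 1 := by ring
        rw [this, hx2, sub_self]
      rcases mul_eq_zero.mp h0 with h | h
      · left; linear_combination h
      · right; linear_combination h
    have hxp : x ^ p ^ 1 = x := by
      rw [pow_one]
      rcases hxor with rfl | rfl
      · exact one_pow p
      · rcases hp.out.eq_two_or_odd' with hP2 | hodd
        · subst hP2
          haveI : CharP (GaloisField 2 r) 2 := inferInstance
          have hneg : (-1 : GaloisField 2 r) = 1 := by
            rw [CharTwo.neg_eq]
          rw [hneg, one_pow]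
        · exact hodd.neg_one_pow
    exact h1 1 (one_dvd r) hr1 hxp
  · obtain ⟨c, hc⟩ := hrdvd
    rcases Nat.lt_or_ge c 2 with hc2 | hc2
    · interval_cases c <;> omega
    · nlinarith

lemma Kset_coe (hr1 : 1 < r) (hr2 : Even r) : Kset p r = ↑(Kfin p r) := by
  have hr0 : r ≠ 0 := by omega
  ext x
  simp only [Kset, Set.mem_setOf_eq, Finset.mem_coe, Kfin, Afin, mem_filter, mem_univ, true_and]
  constructor
  · rintro ⟨h1, k, hk, hxk⟩
    have h2k := key_2k p r hr1 x h1 hk hxk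
    have hk2 : k = r / 2 := by omega
    exact ⟨⟨frob_r p r hr0 x, by rw [← hk2]; exact hxk⟩, (noProper_iff p r (by omega) x).mp h1⟩
  · rintro ⟨⟨_, h2⟩, h3⟩
    exact ⟨(noProper_iff p r (by omega) x).mpr h3, r / 2, Nat.div_lt_self (by omega) one_lt_two, h2⟩

lemma Afin_card (hr0 : r ≠ 0) {d : ℕ} (hd : d ∣ r) (hd0 : 0 < d) :
    (Afin p r d).card = Nat.gcd (p ^ d - 1) (p ^ (r / 2) + 1) := by
  have hp2 : 2 ≤ p := hp.out.two_le
  have h1d : 1 < p ^ d := Nat.one_lt_pow (by omega) (by omega)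
  set g := Nat.gcd (p ^ d - 1) (p ^ (r / 2) + 1) with hg
  have hgpos : 0 < g := Nat.gcd_pos_of_pos_left _ (by omega)
  have hset : Afin p r d = univ.filter (fun x : GaloisField p r => x ^ g = 1) := by
    ext x
    simp only [Afin, mem_filter, mem_univ, true_and]
    constructor
    · rintro ⟨h1, h2⟩
      have hx0 : x ≠ 0 := by
        rintro rfl
        rw [zero_pow (by positivity)] at h2
        exact one_ne_zero h2.symm
      have h1' : x ^ (p ^ d - 1) = 1 := by
        have e : p ^ d - 1 + 1 = p ^ d := by omega
        rw [← e, pow_succ] at h1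
        have := mul_right_cancel₀ hx0 (h1.trans (one_mul x).symm)
        exact this
      exact (pow_gcd_eq_one_iff x _ _).mpr ⟨h1', h2⟩
    · intro h
      obtain ⟨h1, h2⟩ := (pow_gcd_eq_one_iff x _ _).mp h
      refine ⟨?_, h2⟩
      have e : p ^ d = p ^ d - 1 + 1 := by omega
      rw [e, pow_succ, h1, one_mul]
  rw [hset]
  apply card_pow_eq_one_eq g hgpos
  rw [Gcard p r hr0]
  exact (Nat.gcd_dvd_left _ _).trans (NT_sub_dvd hd)

lemma frob_prod (hr0 : r ≠ 0) (x : GaloisField p r) :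
    ∀ T : Finset ℕ, T ⊆ r.primeFactors → (∀ s ∈ T, x ^ p ^ (r / s) = x) →
      x ^ p ^ (r / ∏ t ∈ T, t) = x := by
  intro T
  induction T using Finset.induction_on with
  | empty => intro _ _; simpa using frob_r p r hr0 x
  | @insert s T hsT ih =>
    intro hsub hall
    have hsP : s ∈ r.primeFactors := hsub (mem_insert_self s T)
    have hTP : T ⊆ r.primeFactors := fun t ht => hsub (mem_insert_of_mem ht)
    have hxT : x ^ p ^ (r / ∏ t ∈ T, t) = x := ih hTP (fun t ht => hall t (mem_insert_of_mem ht))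
    have hxs : x ^ p ^ (r / s) = x := hall s (mem_insert_self s T)
    have hsprime : s.Prime := Nat.prime_of_mem_primeFactors hsP
    have hcop : Nat.Coprime s (∏ t ∈ T, t) :=
      Nat.Coprime.prod_right fun t ht =>
        (Nat.coprime_primes hsprime (Nat.prime_of_mem_primeFactors (hTP ht))).mpr
          (by rintro rfl; exact hsT ht)
    have hTpos : 0 < ∏ t ∈ T, t :=
      Finset.prod_pos fun t ht => (Nat.prime_of_mem_primeFactors (hTP ht)).pos
    have hsdvd : s ∣ r := Nat.dvd_of_mem_primeFactors hsP
    have hTdvd : (∏ t ∈ T, t) ∣ r :=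
      (Finset.prod_dvd_prod_of_subset T r.primeFactors id hTP).trans
        (Nat.prod_primeFactors_dvd r)
    have hmul : s * ∏ t ∈ T, t ∣ r := hcop.mul_dvd_of_dvd_of_dvd hsdvd hTdvd
    obtain ⟨m, hm⟩ := hmul
    have h1 : r / s = (∏ t ∈ T, t) * m := by
      rw [hm, mul_assoc, Nat.mul_div_cancel_left _ hsprime.pos]
    have h2 : r / ∏ t ∈ T, t = s * m := by
      rw [hm, show s * (∏ t ∈ T, t) * m = (∏ t ∈ T, t) * (s * m) by ring,
        Nat.mul_div_cancel_left _ hTpos]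
    have h3 : r / ∏ t ∈ insert s T, t = m := by
      rw [prod_insert hsT, hm, Nat.mul_div_cancel_left _ (Nat.mul_pos hsprime.pos hTpos)]
    have hg := frob_gcd (r / ∏ t ∈ T, t) (r / s) x hxT hxs
    rw [h1, h2] at hg
    have hgcd : Nat.gcd (s * m) ((∏ t ∈ T, t) * m) = m := by
      rw [Nat.gcd_mul_right, hcop.gcd_eq_one, one_mul]
    rw [h3]
    rwa [hgcd] at hg

lemma master (hr1 : 1 < r) (hr2 : Even r) :
    ((Kset p r).ncard : ℤ) =
      ∑ T ∈ r.primeFactors.powerset,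
        (-1 : ℤ) ^ T.card * ((Afin p r (r / ∏ t ∈ T, t)).card : ℤ) := by
  have hr0 : r ≠ 0 := by omega
  rw [Kset_coe p r hr1 hr2, Set.ncard_coe_finset]
  have hAeq : ∀ T ∈ r.primeFactors.powerset,
      Afin p r (r / ∏ t ∈ T, t)
        = (Afin p r r).filter (fun x => ∀ s ∈ T, x ^ p ^ (r / s) = x) := by
    intro T hT
    have hTP : T ⊆ r.primeFactors := mem_powerset.mp hT
    have hTdvd : (∏ t ∈ T, t) ∣ r :=
      (Finset.prod_dvd_prod_of_subset T r.primeFactors id hTP).trans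
        (Nat.prod_primeFactors_dvd r)
    have hTpos : 0 < ∏ t ∈ T, t :=
      Finset.prod_pos fun t ht => (Nat.prime_of_mem_primeFactors (hTP ht)).pos
    ext x
    simp only [Afin, mem_filter, mem_univ, true_and]
    constructor
    · rintro ⟨h1, h2⟩
      refine ⟨⟨frob_r p r hr0 x, h2⟩, fun s hs => ?_⟩
      refine frob_dvd x ?_ h1
      exact div_dvd_div_nat (Nat.prime_of_mem_primeFactors (hTP hs)).pos hTpos
        (Finset.dvd_prod_of_mem _ hs) hTdvd
    · rintro ⟨⟨_, h2⟩, hall⟩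
      exact ⟨frob_prod p r hr0 x T hTP hall, h2⟩
  rw [Finset.sum_congr rfl (fun T hT => by rw [hAeq T hT])]
  have swap :
      ∑ T ∈ r.primeFactors.powerset,
        (-1 : ℤ) ^ T.card
          * (((Afin p r r).filter (fun x => ∀ s ∈ T, x ^ p ^ (r / s) = x)).card : ℤ)
      = ∑ x ∈ Afin p r r, ∑ T ∈ r.primeFactors.powerset,
          (-1 : ℤ) ^ T.card * (if ∀ s ∈ T, x ^ p ^ (r / s) = x then (1 : ℤ) else 0) := by
    rw [Finset.sum_comm]
    refine Finset.sum_congr rfl fun T hT => ?_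
    rw [← Finset.mul_sum, Finset.sum_boole]
  rw [swap]
  have inner : ∀ x ∈ Afin p r r,
      ∑ T ∈ r.primeFactors.powerset,
          (-1 : ℤ) ^ T.card * (if ∀ s ∈ T, x ^ p ^ (r / s) = x then (1 : ℤ) else 0)
        = if (∀ s ∈ r.primeFactors, x ^ p ^ (r / s) ≠ x) then 1 else 0 := by
    intro x _
    classical
    set Bx := r.primeFactors.filter (fun s => x ^ p ^ (r / s) = x) with hBx
    have step1 : ∑ T ∈ r.primeFactors.powerset,
        (-1 : ℤ) ^ T.card * (if ∀ s ∈ T, x ^ p ^ (r / s) = x then (1 : ℤ) else 0)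
        = ∑ T ∈ r.primeFactors.powerset, (if T ⊆ Bx then (-1 : ℤ) ^ T.card else 0) := by
      refine Finset.sum_congr rfl fun T hT => ?_
      have hTP : T ⊆ r.primeFactors := mem_powerset.mp hT
      rw [mul_ite, mul_one, mul_zero]
      congr 1
      · apply propext
        constructor
        · intro h s hs
          exact mem_filter.mpr ⟨hTP hs, h s hs⟩
        · intro h s hs
          exact (mem_filter.mp (h hs)).2
    have step2 : ∑ T ∈ r.primeFactors.powerset, (if T ⊆ Bx then (-1 : ℤ) ^ T.card else 0)
        = ∑ T ∈ Bx.powerset, (-1 : ℤ) ^ T.card := by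
      rw [← Finset.sum_filter]
      congr 1
      ext T
      simp only [mem_filter, mem_powerset]
      constructor
      · rintro ⟨_, h⟩; exact h
      · intro h; exact ⟨h.trans (filter_subset _ _), h⟩
    rw [step1, step2, Finset.sum_powerset_neg_one_pow_card]
    congr 1
    apply propext
    rw [Finset.filter_eq_empty_iff]
  rw [Finset.sum_congr rfl inner, Finset.sum_boole]
  simp only [Kfin]
end Galois

section Values

open Finset

variable (p r : ℕ) [hp : Fact p.Prime]

lemma split_of_not_dvd_half {r d : ℕ} (h2 : 2 ∣ r) (hd : d ∣ r) (hnd : ¬ d ∣ r / 2) :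
    ∃ d' c, d = 2 * d' ∧ r / 2 = d' * c ∧ Odd c := by
  obtain ⟨c, hc⟩ := hd
  have hc2 : ¬ 2 ∣ c := by
    rintro ⟨t, rfl⟩
    apply hnd
    refine ⟨t, ?_⟩
    rw [hc, show d * (2 * t) = 2 * (d * t) by ring, Nat.mul_div_cancel_left _ two_pos]
  have hdeven : 2 ∣ d := by
    rcases (Nat.Prime.dvd_mul Nat.prime_two).mp (by rw [← hc]; exact h2) with h | h
    · exact h
    · exact absurd h hc2
  obtain ⟨d', rfl⟩ := hdeven
  refine ⟨d', c, rfl, ?_, Nat.odd_iff.mpr (by omega)⟩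
  rw [hc, show 2 * d' * c = 2 * (d' * c) by ring, Nat.mul_div_cancel_left _ two_pos]

lemma Afin_card_dvd_half (hr0 : r ≠ 0) (h2r : 2 ∣ r) {d : ℕ} (hd0 : 0 < d) (hd : d ∣ r / 2) :
    (Afin p r d).card = if p = 2 then 1 else 2 := by
  rw [Afin_card p r hr0 (hd.trans (Nat.div_dvd_of_dvd h2r)) hd0, NT_a hp.out hd0 hd]

lemma Afin_card_not_dvd_half (hr0 : r ≠ 0) (h2r : 2 ∣ r) {d : ℕ} (hd : d ∣ r)
    (hnd : ¬ d ∣ r / 2) : (Afin p r d).card = p ^ (d / 2) + 1 := by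
  have hd0 : 0 < d := Nat.pos_of_dvd_of_pos hd (by omega)
  obtain ⟨d', c, hdd, hhalf, hodd⟩ := split_of_not_dvd_half h2r hd hnd
  have hd2 : d / 2 = d' := by omega
  rw [Afin_card p r hr0 hd hd0, hd2, hdd, hhalf, NT_b hp.out.two_le hodd]

end Values

open Finset

/-- **The cardinality of `K(r)`.** -/
theorem card_Kset (p r : ℕ) [Fact p.Prime] (hr : 0 < r) :
    (r = 1 → (Odd p → (Kset p r).ncard = 2) ∧ (p = 2 → (Kset p r).ncard = 1)) ∧
    (Odd r → 1 < r → (Kset p r).ncard = 0) ∧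
    (∀ s₁ : ℕ, 1 ≤ s₁ → r = 2 ^ s₁ →
      (Odd p → (Kset p r).ncard = p ^ (r / 2) - 1) ∧
      (p = 2 → (Kset p r).ncard = p ^ (r / 2))) ∧
    (Even r → (r.primeFactors.erase 2).Nonempty →
      ((Kset p r).ncard : ℤ) =
        ∑ T ∈ (r.primeFactors.erase 2).powerset,
          (-1 : ℤ) ^ T.card * (p : ℤ) ^ (r / (2 * ∏ t ∈ T, t))) := by
  have hp := (Fact.out : p.Prime)
  refine ⟨?_, ?_, ?_, ?_⟩
  · -- case r = 1
    rintro rfl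
    have hKeq : Kset p 1 = {x : GaloisField p 1 | x * x = 1} := by
      ext x
      simp only [Kset, Set.mem_setOf_eq, noProperSubfield]
      constructor
      · rintro ⟨-, k, hk, hxk⟩
        interval_cases k
        have e : x ^ (p ^ 0 + 1) = x * x := by norm_num [pow_succ]
        rwa [e] at hxk
      · intro h
        refine ⟨?_, 0, one_pos, ?_⟩
        · intro d hd hd1
          have := Nat.dvd_one.mp hd
          omega
        · have e : x ^ (p ^ 0 + 1) = x * x := by norm_num [pow_succ]
          rwa [e]
    have hxor : ∀ x : GaloisField p 1, x * x = 1 → x = 1 ∨ x = -1 := by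
      intro x h
      have h0 : (x - 1) * (x + 1) = 0 := by
        have e : (x - 1) * (x + 1) = x * x - 1 := by ring
        rw [e, h, sub_self]
      rcases mul_eq_zero.mp h0 with h' | h'
      · left; linear_combination h'
      · right; linear_combination h'
    constructor
    · intro hodd
      have hne : (-1 : GaloisField p 1) ≠ 1 := by
        intro h
        have h2 : ((2 : ℕ) : GaloisField p 1) = 0 := by push_cast; linear_combination -h
        have hdvd := (CharP.cast_eq_zero_iff (GaloisField p 1) p 2).mp h2
        have := (Nat.prime_dvd_prime_iff_eq hp Nat.prime_two).mp hdvd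
        rw [Nat.odd_iff] at hodd
        omega
      have hKpair : Kset p 1 = {1, -1} := by
        rw [hKeq]
        ext x
        simp only [Set.mem_setOf_eq, Set.mem_insert_iff, Set.mem_singleton_iff]
        constructor
        · exact hxor x
        · rintro (rfl | rfl) <;> norm_num
      rw [hKpair, Set.ncard_pair (fun h => hne h.symm)]
    · rintro rfl
      haveI : CharP (GaloisField 2 1) 2 := inferInstance
      have hneg : (-1 : GaloisField 2 1) = 1 := CharTwo.neg_eq 1
      have hKone : Kset 2 1 = {1} := by
        rw [hKeq]
        ext x
        simp only [Set.mem_setOf_eq, Set.mem_singleton_iff]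
        constructor
        · intro h
          rcases hxor x h with rfl | h'
          · rfl
          · rw [h', hneg]
        · rintro rfl; norm_num
      rw [hKone, Set.ncard_singleton]
  · -- case r odd, 1 < r
    intro hodd hr1
    have hempty : Kset p r = ∅ := by
      ext x
      simp only [Set.mem_empty_iff_false, iff_false, Kset, Set.mem_setOf_eq, not_and, not_exists]
      rintro h1 k hk hxk
      have h2k := key_2k p r hr1 x h1 hk hxk
      rw [Nat.odd_iff] at hodd
      omega
    rw [hempty, Set.ncard_empty]
  · -- case r = 2 ^ s₁
    rintro s₁ hs1 rfl
    have hr1 : 1 < 2 ^ s₁ := Nat.one_lt_two_pow_iff.mpr (by omega)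
    have hr2 : Even (2 ^ s₁) := (Nat.even_pow).mpr ⟨even_iff_two_dvd.mpr ⟨1, rfl⟩, by omega⟩
    have hP : (2 ^ s₁ : ℕ).primeFactors = {2} := by
      rw [Nat.primeFactors_pow 2 (by omega), Nat.Prime.primeFactors Nat.prime_two]
    have hm := master p (2 ^ s₁) hr1 hr2
    rw [hP, show ({2} : Finset ℕ) = insert 2 (∅ : Finset ℕ) from rfl,
      Finset.sum_powerset_insert (Finset.notMem_empty 2)] at hm
    simp only [Finset.powerset_empty, Finset.sum_singleton, Finset.prod_empty,
      Finset.card_empty, Finset.prod_insert (Finset.notMem_empty 2),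
      Finset.card_insert_of_notMem (Finset.notMem_empty 2), Finset.prod_empty,
      Nat.div_one, pow_zero, pow_one, one_mul, neg_one_mul, mul_one] at hm
    have hndvd : ¬ (2 ^ s₁ ∣ 2 ^ s₁ / 2) := by
      intro h
      have h1 : 0 < 2 ^ s₁ / 2 := Nat.div_pos (by omega) two_pos
      have := Nat.le_of_dvd h1 h
      omega
    have hv1 : (Afin p (2 ^ s₁) (2 ^ s₁)).card = p ^ (2 ^ s₁ / 2) + 1 :=
      Afin_card_not_dvd_half p _ (by omega) hr2.two_dvd dvd_rfl hndvd
    have hv2 : (Afin p (2 ^ s₁) (2 ^ s₁ / 2)).card = if p = 2 then 1 else 2 :=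
      Afin_card_dvd_half p _ (by omega) hr2.two_dvd (Nat.div_pos (by omega) two_pos) dvd_rfl
    rw [hv1, hv2] at hm
    have hple : 1 ≤ p ^ (2 ^ s₁ / 2) := Nat.one_le_pow _ _ hp.pos
    constructor
    · intro hodd
      have hpne : p ≠ 2 := by rw [Nat.odd_iff] at hodd; omega
      rw [if_neg hpne] at hm
      omega
    · rintro rfl
      rw [if_pos rfl] at hm
      omega
  · -- general even case with an odd prime factor
    intro hr2 hne
    have hr1 : 1 < r := by
      obtain ⟨t, ht⟩ := hr2
      omega
    have h2r : 2 ∣ r := hr2.two_dvd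
    have h2P : 2 ∈ r.primeFactors := Nat.mem_primeFactors.mpr ⟨Nat.prime_two, h2r, by omega⟩
    have hm := master p r hr1 hr2
    rw [← Finset.insert_erase h2P,
      Finset.sum_powerset_insert (Finset.notMem_erase 2 _)] at hm
    -- facts about T ⊆ erase
    have hfacts : ∀ T ∈ (r.primeFactors.erase 2).powerset,
        (∏ t ∈ T, t) ∣ r ∧ ¬ 2 ∣ (∏ t ∈ T, t) ∧ 0 < (∏ t ∈ T, t) ∧ 2 ∉ T := by
      intro T hT
      have hTP' : T ⊆ r.primeFactors.erase 2 := Finset.mem_powerset.mp hT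
      have hTP : T ⊆ r.primeFactors := hTP'.trans (Finset.erase_subset _ _)
      refine ⟨(Finset.prod_dvd_prod_of_subset T r.primeFactors id hTP).trans
        (Nat.prod_primeFactors_dvd r), ?_, ?_, ?_⟩
      · intro h2prod
        obtain ⟨a, ha, h2a⟩ := (Nat.prime_two.prime.dvd_finset_prod_iff _).mp h2prod
        have haprime : a.Prime := Nat.prime_of_mem_primeFactors (hTP ha)
        have : a = 2 := ((Nat.prime_dvd_prime_iff_eq Nat.prime_two haprime).mp h2a).symm
        exact Finset.ne_of_mem_erase (hTP' ha) this
      · exact Finset.prod_pos fun t ht => (Nat.prime_of_mem_primeFactors (hTP ht)).pos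
      · intro h2T
        exact Finset.ne_of_mem_erase (hTP' h2T) rfl
    have hval1 : ∀ T ∈ (r.primeFactors.erase 2).powerset,
        (Afin p r (r / ∏ t ∈ T, t)).card = p ^ (r / (2 * ∏ t ∈ T, t)) + 1 := by
      intro T hT
      obtain ⟨hTdvd, hT2, hTpos, _⟩ := hfacts T hT
      set e := ∏ t ∈ T, t
      have hd : r / e ∣ r := Nat.div_dvd_of_dvd hTdvd
      have hre : r = e * (r / e) := (Nat.mul_div_cancel' hTdvd).symm
      have hdpos : 0 < r / e := Nat.div_pos (Nat.le_of_dvd (by omega) hTdvd) hTpos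
      have hnd : ¬ (r / e ∣ r / 2) := by
        rintro ⟨t, ht⟩
        have : r = 2 * ((r / e) * t) := by omega
        have he2 : e * (r / e) = 2 * t * (r / e) := by
          calc e * (r / e) = r := hre.symm
            _ = 2 * (r / e * t) := this
            _ = 2 * t * (r / e) := by ring
        have : e = 2 * t := by
          have := Nat.eq_of_mul_eq_mul_right hdpos he2
          omega
        exact hT2 ⟨t, this⟩
      rw [Afin_card_not_dvd_half p r (by omega) h2r hd hnd]
      congr 1
      -- (r / e) / 2 = r / (2 * e)
      rw [Nat.div_div_eq_div_mul, mul_comm]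
    have hval2 : ∀ T ∈ (r.primeFactors.erase 2).powerset,
        (Afin p r (r / ∏ t ∈ insert 2 T, t)).card = if p = 2 then 1 else 2 := by
      intro T hT
      obtain ⟨hTdvd, hT2, hTpos, h2T⟩ := hfacts T hT
      rw [Finset.prod_insert h2T]
      set e := ∏ t ∈ T, t
      have hcop : Nat.Coprime 2 e := (Nat.Prime.coprime_iff_not_dvd Nat.prime_two).mpr hT2
      have h2e : 2 * e ∣ r := hcop.mul_dvd_of_dvd_of_dvd h2r hTdvd
      obtain ⟨m, hmm⟩ := h2e
      have hd2 : r / (2 * e) = m := by rw [hmm, Nat.mul_div_cancel_left _ (by omega)]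
      have hmpos : 0 < m := by
        rcases Nat.eq_zero_or_pos m with rfl | h
        · omega
        · exact h
      have hmdvd : m ∣ r / 2 := by
        refine ⟨e, ?_⟩
        rw [hmm, show 2 * e * m = 2 * (m * e) by ring, Nat.mul_div_cancel_left _ two_pos]
      rw [hd2]
      exact Afin_card_dvd_half p r (by omega) h2r hmpos hmdvd
    have hsum0 : ∑ T ∈ (r.primeFactors.erase 2).powerset, (-1 : ℤ) ^ T.card = 0 :=
      Finset.sum_powerset_neg_one_pow_card_of_nonempty hne
    have e1 : ∑ T ∈ (r.primeFactors.erase 2).powerset,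
        (-1 : ℤ) ^ T.card * ((Afin p r (r / ∏ t ∈ T, t)).card : ℤ)
        = (∑ T ∈ (r.primeFactors.erase 2).powerset,
            (-1 : ℤ) ^ T.card * (p : ℤ) ^ (r / (2 * ∏ t ∈ T, t)))
          + ∑ T ∈ (r.primeFactors.erase 2).powerset, (-1 : ℤ) ^ T.card := by
      rw [← Finset.sum_add_distrib]
      refine Finset.sum_congr rfl fun T hT => ?_
      rw [hval1 T hT]
      push_cast
      ring
    have e2 : ∑ T ∈ (r.primeFactors.erase 2).powerset,
        (-1 : ℤ) ^ (insert 2 T).card * ((Afin p r (r / ∏ t ∈ insert 2 T, t)).card : ℤ)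
        = -(if p = 2 then (1 : ℤ) else 2)
            * ∑ T ∈ (r.primeFactors.erase 2).powerset, (-1 : ℤ) ^ T.card := by
      rw [Finset.mul_sum]
      refine Finset.sum_congr rfl fun T hT => ?_
      obtain ⟨_, _, _, h2T⟩ := hfacts T hT
      rw [hval2 T hT, Finset.card_insert_of_notMem h2T]
      rcases eq_or_ne p 2 with h | h <;> simp [h, pow_succ] <;> ring
    rw [e1, e2, hsum0] at hm
    simpa using hm
end
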